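/- arXiv:1203.3740 — 12 statements merged into one kernel-verified Lean document; each statement's English description precedes it below -/
import Mathlib

section
/- Let S be a semigroup and a, a' ∈ S. The following are equivalent: (1) a ≤_R aa' and aa' is group invertible; (2) a ≤_L a'a and a'a is group invertible; (3) aa'a H a; (4) a ≤_H aa'a. Moreover, in this case a(a'a)# = (aa')#a, and setting b = a(a'a)#, one has ba'a = a = aa'b and b ≤_H a. -/
variable {S : Type*} [Semigroup S]

/-- Green's preorder `≤_L`: `a ∈ S¹ b`. -/
def leL (a b : S) : Prop := a = b ∨ ∃ x : S, a = x * b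
/-- Green's preorder `≤_R`: `a ∈ b S¹`. -/
def leR (a b : S) : Prop := a = b ∨ ∃ x : S, a = b * x
/-- Green's preorder `≤_H`. -/
def leH (a b : S) : Prop := leL a b ∧ leR a b
/-- Green's relation `L`. -/
def grL (a b : S) : Prop := leL a b ∧ leL b a
/-- Green's relation `R`. -/
def grR (a b : S) : Prop := leR a b ∧ leR b a
/-- Green's relation `H`. -/
def grH (a b : S) : Prop := leH a b ∧ leH b a
/-- `x` is the group inverse of `a`. -/
def IsGrpInv (a x : S) : Prop := a * x = x * a ∧ a * x * a = a ∧ x * a * x = x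
/-- `a` is group invertible. -/
def GrpInvertible (a : S) : Prop := ∃ x : S, IsGrpInv a x
/-- `x ∈ V(a)[H]`: inverse of `a` modulo `H`. -/
def VH (a x : S) : Prop := grH (a * x * a) a ∧ grH (x * a * x) x
/-- `x ∈ A(a)[H]`: associate of `a` modulo `H`. -/
def AH (a x : S) : Prop := grH (a * x * a) a
/-- `x ∈ V(a)`: reflexive inverse of `a`. -/
def refInv (a x : S) : Prop := a * x * a = a ∧ x * a * x = x
/-- The `H`-class of `a`. -/
def Hclass (a : S) : Set S := {b : S | grH b a}


private lemma aux_grp (x u v : S) (hu : x = x*(x*u)) (hv : x = v*(x*x)) : GrpInvertible x := by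
  have h1 : x*u = v*x := by
    conv_lhs => lhs; rw [hv]
    rw [show (v*(x*x))*u = v*(x*(x*u)) by simp only [mul_assoc], ← hu]
  have h2 : x*(u*x) = x := by
    rw [show x*(u*x) = (x*u)*x by rw [mul_assoc], h1,
        show (v*x)*x = v*(x*x) by rw [mul_assoc], ← hv]
  have h3 : x*(v*x) = x := by
    conv_lhs => rhs; rhs; rw [hu]
    rw [show x*(v*(x*(x*u))) = (x*(v*(x*x)))*u by simp only [mul_assoc], ← hv,
        mul_assoc, ← hu]
  have hxg : x*(v*(x*u)) = x*u := by
    rw [show x*(v*(x*u)) = (x*(v*x))*u by simp only [mul_assoc], h3]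
  have hgx : (v*(x*u))*x = v*x := by
    rw [show (v*(x*u))*x = v*(x*(u*x)) by simp only [mul_assoc], h2]
  refine ⟨v*(x*u), ?_, ?_, ?_⟩
  · rw [hxg, hgx, h1]
  · rw [hxg, mul_assoc, h2]
  · rw [hgx, show (v*x)*(v*(x*u)) = v*(x*(v*(x*u))) by simp only [mul_assoc], hxg]

private lemma key_e {a a' y : S} (hR : leR a (a*a')) (hy : IsGrpInv (a*a') y) :
    a = (a*a')*(y*a) := by
  have hR' : a = a*a' ∨ ∃ z : S, a = (a*a')*z := hR
  rcases hR' with h | ⟨z, h⟩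
  · calc a = a*a' := h
      _ = (a*a')*y*(a*a') := (hy.2.1).symm
      _ = (a*a')*(y*a) := by
          conv_rhs => rhs; rhs; rw [h]
          simp only [mul_assoc]
  · calc a = (a*a')*z := h
      _ = ((a*a')*y*(a*a'))*z := by rw [hy.2.1]
      _ = (a*a')*(y*a) := by
          conv_rhs => rhs; rhs; rw [h]
          simp only [mul_assoc]

private lemma key_d {a a' x : S} (hL : leL a (a'*a)) (hx : IsGrpInv (a'*a) x) :
    a = (a*x)*(a'*a) := by
  have hL' : a = a'*a ∨ ∃ z : S, a = z*(a'*a) := hL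
  rcases hL' with h | ⟨z, h⟩
  · calc a = a'*a := h
      _ = (a'*a)*x*(a'*a) := (hx.2.1).symm
      _ = (a*x)*(a'*a) := by
          conv_rhs => lhs; lhs; rw [h]
  · calc a = z*(a'*a) := h
      _ = z*((a'*a)*x*(a'*a)) := by rw [hx.2.1]
      _ = (a*x)*(a'*a) := by
          conv_rhs => lhs; lhs; rw [h]
          simp only [mul_assoc]

private lemma norm_t {a a' : S} (h : leR a (a*a'*a)) : ∃ t : S, a = (a*(a'*a))*t := by
  have h' : a = a*a'*a ∨ ∃ z : S, a = (a*a'*a)*z := h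
  rcases h' with h | ⟨z, h⟩
  · refine ⟨a'*a, ?_⟩
    calc a = (a*a')*a := h
      _ = (a*a')*((a*a')*a) := by conv_lhs => rhs; rw [h]
      _ = (a*(a'*a))*(a'*a) := by simp only [mul_assoc]
  · refine ⟨z, ?_⟩
    conv_lhs => rw [h]
    simp only [mul_assoc]

private lemma norm_s {a a' : S} (h : leL a (a*a'*a)) : ∃ s : S, a = s*(a*(a'*a)) := by
  have h' : a = a*a'*a ∨ ∃ z : S, a = z*(a*a'*a) := h
  rcases h' with h | ⟨z, h⟩
  · refine ⟨a*a', ?_⟩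
    calc a = (a*a')*a := h
      _ = (a*a')*((a*a')*a) := by conv_lhs => rhs; rw [h]
      _ = (a*a')*(a*(a'*a)) := by simp only [mul_assoc]
  · refine ⟨z, ?_⟩
    conv_lhs => rw [h]
    simp only [mul_assoc]

private lemma e_inv {a a' s t : S} (hs : a = s*(a*(a'*a))) (ht : a = (a*(a'*a))*t) :
    GrpInvertible (a*a') := by
  have he : a = (a*a')*(a*t) := by
    conv_lhs => rw [ht]
    simp only [mul_assoc]
  apply aux_grp (a*a') (a*(t*(t*a'))) s
  · calc a*a' = ((a*a')*(a*t))*a' := by conv_lhs => lhs; rw [he]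
      _ = ((a*a')*(((a*a')*(a*t))*t))*a' := by conv_lhs => lhs; rhs; lhs; rw [he]
      _ = (a*a')*((a*a')*(a*(t*(t*a')))) := by simp only [mul_assoc]
  · calc a*a' = (s*(a*(a'*a)))*a' := by conv_lhs => lhs; rw [hs]
      _ = s*((a*a')*(a*a')) := by simp only [mul_assoc]

private lemma d_inv {a a' s t : S} (hs : a = s*(a*(a'*a))) (ht : a = (a*(a'*a))*t) :
    GrpInvertible (a'*a) := by
  apply aux_grp (a'*a) t (a'*(s*(s*a)))
  · calc a'*a = a'*((a*(a'*a))*t) := by conv_lhs => rhs; rw [ht]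
      _ = (a'*a)*((a'*a)*t) := by simp only [mul_assoc]
  · calc a'*a = a'*(s*(a*(a'*a))) := by conv_lhs => rhs; rw [hs]
      _ = a'*(s*((s*(a*(a'*a)))*(a'*a))) := by conv_lhs => rhs; rhs; lhs; rw [hs]
      _ = (a'*(s*(s*a)))*((a'*a)*(a'*a)) := by simp only [mul_assoc]

theorem stmt0 (a a' : S) :
    ([leR a (a * a') ∧ GrpInvertible (a * a'),
      leL a (a' * a) ∧ GrpInvertible (a' * a),
      grH (a * a' * a) a,
      leH a (a * a' * a)].TFAE)
    ∧ (grH (a * a' * a) a →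
        ∀ x y : S, IsGrpInv (a' * a) x → IsGrpInv (a * a') y →
          a * x = y * a ∧ (a * x) * a' * a = a ∧ a * a' * (a * x) = a ∧ leH (a * x) a) := by
  constructor
  · tfae_have 1 → 4 := by
      rintro ⟨hR, y, hy⟩
      have hke := key_e hR hy
      constructor
      · refine Or.inr ⟨y, ?_⟩
        calc a = (a*a')*(y*a) := hke
          _ = ((a*a')*y)*a := by simp only [mul_assoc]
          _ = (y*(a*a'))*a := by rw [hy.1]
          _ = y*(a*a'*a) := by simp only [mul_assoc]
      · refine Or.inr ⟨a'*(y*(y*a)), ?_⟩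
        calc a = (a*a')*(y*a) := hke
          _ = (a*a')*(y*((a*a')*(y*a))) := by
              conv_lhs => rhs; rhs; rw [hke]
          _ = (a*a')*((y*(a*a'))*(y*a)) := by simp only [mul_assoc]
          _ = (a*a')*(((a*a')*y)*(y*a)) := by rw [← hy.1]
          _ = (a*a'*a)*(a'*(y*(y*a))) := by simp only [mul_assoc]
    tfae_have 2 → 4 := by
      rintro ⟨hL, x, hx⟩
      have hkd := key_d hL hx
      constructor
      · refine Or.inr ⟨a*(x*(x*a')), ?_⟩
        calc a = (a*x)*(a'*a) := hkd
          _ = (((a*x)*(a'*a))*x)*(a'*a) := by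
              conv_lhs => lhs; lhs; rw [hkd]
          _ = (a*x)*(((a'*a)*x)*(a'*a)) := by simp only [mul_assoc]
          _ = (a*x)*((x*(a'*a))*(a'*a)) := by rw [hx.1]
          _ = (a*(x*(x*a')))*(a*a'*a) := by simp only [mul_assoc]
      · refine Or.inr ⟨x, ?_⟩
        calc a = (a*x)*(a'*a) := hkd
          _ = a*(x*(a'*a)) := by simp only [mul_assoc]
          _ = a*((a'*a)*x) := by rw [← hx.1]
          _ = (a*a'*a)*x := by simp only [mul_assoc]
    tfae_have 4 → 1 := by
      intro h4
      obtain ⟨s, hs⟩ := norm_s h4.1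
      obtain ⟨t, ht⟩ := norm_t h4.2
      refine ⟨Or.inr ⟨a*t, ?_⟩, e_inv hs ht⟩
      conv_lhs => rw [ht]
      simp only [mul_assoc]
    tfae_have 4 → 2 := by
      intro h4
      obtain ⟨s, hs⟩ := norm_s h4.1
      obtain ⟨t, ht⟩ := norm_t h4.2
      refine ⟨Or.inr ⟨s*a, ?_⟩, d_inv hs ht⟩
      conv_lhs => rw [hs]
      simp only [mul_assoc]
    tfae_have 3 ↔ 4 := by
      constructor
      · exact fun h => h.2
      · intro h
        exact ⟨⟨Or.inr ⟨a*a', rfl⟩, Or.inr ⟨a'*a, by simp only [mul_assoc]⟩⟩, h⟩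
    tfae_finish
  · rintro hH x y hx hy
    obtain ⟨s, hs⟩ := norm_s hH.2.1
    obtain ⟨t, ht⟩ := norm_t hH.2.2
    have hL : leL a (a'*a) := by
      refine Or.inr ⟨s*a, ?_⟩
      conv_lhs => rw [hs]
      simp only [mul_assoc]
    have hR : leR a (a*a') := by
      refine Or.inr ⟨a*t, ?_⟩
      conv_lhs => rw [ht]
      simp only [mul_assoc]
    have hkd := key_d hL hx
    have hke := key_e hR hy
    have hxy : a*x = y*a := by
      have h : y*a = a*x := by
        calc y*a = y*((a*x)*(a'*a)) := by conv_lhs => rhs; rw [hkd]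
          _ = y*(a*(x*(a'*a))) := by simp only [mul_assoc]
          _ = y*(a*((a'*a)*x)) := by rw [← hx.1]
          _ = ((y*(a*a'))*a)*x := by simp only [mul_assoc]
          _ = (((a*a')*y)*a)*x := by rw [← hy.1]
          _ = ((a*a')*(y*a))*x := by simp only [mul_assoc]
          _ = a*x := by conv_rhs => lhs; rw [hke]
      exact h.symm
    refine ⟨hxy, ?_, ?_, Or.inr ⟨y, hxy⟩, Or.inr ⟨x, rfl⟩⟩
    · rw [mul_assoc, ← hkd]
    · rw [hxy, ← hke]
end

section
/- Let S be a semigroup and a, a' ∈ S. Then aa'a H a if and only if H_a a' H_a = H_a, where H_a a' H_a = {x a' y : x, y ∈ H_a}. -/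
variable {S : Type*} [Semigroup S]

lemma leL_refl (a : S) : leL a a := Or.inl rfl
lemma leR_refl (a : S) : leR a a := Or.inl rfl

lemma grH_refl (a : S) : grH a a :=
  ⟨⟨leL_refl a, leR_refl a⟩, leL_refl a, leR_refl a⟩

lemma leL_trans {a b c : S} (h1 : leL a b) (h2 : leL b c) : leL a c := by
  rcases h1 with rfl | ⟨u, rfl⟩
  · exact h2
  · rcases h2 with rfl | ⟨v, rfl⟩
    · exact Or.inr ⟨u, rfl⟩
    · exact Or.inr ⟨u * v, (mul_assoc u v c).symm⟩

lemma leR_trans {a b c : S} (h1 : leR a b) (h2 : leR b c) : leR a c := by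
  rcases h1 with rfl | ⟨u, rfl⟩
  · exact h2
  · rcases h2 with rfl | ⟨v, rfl⟩
    · exact Or.inr ⟨u, rfl⟩
    · exact Or.inr ⟨v * u, (mul_assoc c v u)⟩

lemma leL_mul_right {a b : S} (h : leL a b) (c : S) : leL (a * c) (b * c) := by
  rcases h with rfl | ⟨u, rfl⟩
  · exact leL_refl _
  · exact Or.inr ⟨u, mul_assoc u b c⟩

lemma leR_mul_self (a c : S) : leR (a * c) a := Or.inr ⟨c, rfl⟩

/-- If `x ≤_L a` and `a = a * c` then `x = x * c`. -/
lemma eat {a x c : S} (h : leL x a) (he : a = a * c) : x = x * c := by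
  rcases h with rfl | ⟨u, rfl⟩
  · exact he
  · rw [mul_assoc, ← he]

/-- Key translation lemma: if `z H a`, `y H a`, and `y = a * t`, then `z * t H a`. -/
lemma key2 {a z y t : S} (hz : grH z a) (hy : grH y a) (hyt : y = a * t) :
    grH (z * t) a := by
  subst hyt
  obtain ⟨⟨hzL, hzR⟩, hazL, hazR⟩ := hz
  obtain ⟨⟨hyL, hyR⟩, hayL, hayR⟩ := hy
  refine ⟨⟨?_, ?_⟩, ?_, ?_⟩
  · exact leL_trans (leL_mul_right hzL t) hyL
  · exact leR_trans (leR_mul_self z t) hzR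
  · exact leL_trans hayL (leL_mul_right hazL t)
  · rcases hayR with he | ⟨t', he⟩
    · have hz' : z = z * t := eat hzL he
      rw [← hz']; exact hazR
    · have he' : a = a * (t * t') := by rw [← mul_assoc]; exact he
      have hz' : z = z * t * t' := by rw [mul_assoc]; exact eat hzL he'
      exact leR_trans hazR (Or.inr ⟨t', hz'⟩)

theorem stmt1 (a a' : S) :
    grH (a * a' * a) a ↔
      {z : S | ∃ x ∈ Hclass a, ∃ y ∈ Hclass a, z = x * a' * y} = Hclass a := by
  constructor
  · intro h
    ext b
    simp only [Set.mem_setOf_eq, Hclass]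
    constructor
    · rintro ⟨x, hx, y, hy, rfl⟩
      have hz : grH (x * (a' * a)) a := key2 hx h (mul_assoc a a' a)
      rcases hy.1.2 with hye | ⟨t, hyt⟩
      · rw [hye, mul_assoc]; exact hz
      · have h2 : grH (x * (a' * a) * t) a := key2 hz hy hyt
        have : x * a' * y = x * (a' * a) * t := by
          rw [hyt, mul_assoc, mul_assoc, mul_assoc]
        rw [this]; exact h2
    · intro hb
      have haL : leL a (a * (a' * a)) := by
        have := h.2.1; rwa [mul_assoc] at this
      have haR : leR a (a * (a' * a)) := by
        have := h.2.2; rwa [mul_assoc] at this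
      have hsL : leL (a * (a' * a)) a := by
        have := h.1.1; rwa [mul_assoc] at this
      rcases haR with he | ⟨t', he⟩
      · -- a = a * (a' * a)
        have hb' : b = b * (a' * a) := eat hb.1.1 he
        exact ⟨b, hb, a, grH_refl a, by rw [mul_assoc]; exact hb'⟩
      · -- a = a * (a' * a) * t'
        -- b L a L a*(a'*a)
        have hbL : leL b (a * (a' * a)) := leL_trans hb.1.1 haL
        have hbL' : leL (a * (a' * a)) b := leL_trans hsL hb.2.1
        have hc : a * (a' * a) = a * (a' * a) * (t' * (a' * a)) := by
          rw [← mul_assoc (a * (a' * a)) t' (a' * a), ← he]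
        have hb' : b = b * t' * (a' * a) := by
          rw [mul_assoc]; exact eat hbL hc
        refine ⟨b * t', ⟨⟨?_, ?_⟩, ?_, ?_⟩, a, grH_refl a, ?_⟩
        · have := leL_mul_right hbL t'
          rwa [← he] at this
        · exact leR_trans (leR_mul_self b t') hb.1.2
        · have := leL_mul_right hbL' t'
          rwa [← he] at this
        · exact leR_trans hb.2.2 (Or.inr ⟨a' * a, hb'⟩)
        · rw [mul_assoc (b * t') a' a]
          exact hb'
  · intro hset
    have : a * a' * a ∈ {z : S | ∃ x ∈ Hclass a, ∃ y ∈ Hclass a, z = x * a' * y} :=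
      ⟨a, grH_refl a, a, grH_refl a, rfl⟩
    rw [hset] at this
    exact this
end

section
/- Let S be a semigroup, a ∈ S, and a', a'' ∈ A(a)[H]. Then a'a and aa' are group invertible, and a'aa'' ∈ V(a)[H], i.e. a(a'aa'')a H a and (a'aa'')a(a'aa'') H a'aa''. -/
variable {S : Type*} [Semigroup S]

/-- If `x = x²u` and `x = zx²` then `x` is group invertible. -/
theorem grp_aux (x z u : S) (h1 : x * x * u = x) (h2 : z * (x * x) = x) :
    GrpInvertible x := by
  have hq : x * (x * u) = x := by rw [← mul_assoc, h1]
  have hp : z * x * x = x := by rw [mul_assoc, h2]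
  have e1 : z * x * (x * u) = z * x := by rw [mul_assoc, hq]
  have e2 : z * x * (x * u) = x * u := by rw [← mul_assoc, hp]
  have hpq : z * x = x * u := e1.symm.trans e2
  have c1 : x * (z * x * u) = x * u := by
    rw [hpq, ← mul_assoc, hq]
  have c2 : z * x * u * x = z * x := by
    rw [mul_assoc z x u, mul_assoc, ← hpq, hp]
  have pp : z * x * (z * x) = z * x := by
    nth_rewrite 2 [hpq]
    exact e1
  refine ⟨z * x * u, ?_, ?_, ?_⟩
  · rw [c1, c2, hpq]
  · rw [c1, ← hpq, hp]
  · rw [c2, ← mul_assoc, pp]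

theorem stmt4 (a a' a'' : S) (h' : AH a a') (h'' : AH a a'') :
    GrpInvertible (a' * a) ∧ GrpInvertible (a * a') ∧ VH a (a' * a * a'') := by
  obtain ⟨⟨hL1', hR1'⟩, hL2', hR2'⟩ := h'
  obtain ⟨⟨hL1'', hR1''⟩, hL2'', hR2''⟩ := h''
  have k' : a * (a' * a) = a → a * a' * a = a := fun h => by rw [mul_assoc]; exact h
  -- extract witnesses in base (right-associated) form
  obtain ⟨x', hx'⟩ : ∃ x, x * (a * (a' * a)) = a := by
    rcases hL2' with h | ⟨x, hx⟩
    · have k : a * (a' * a) = a := by rw [← mul_assoc]; exact h.symm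
      exact ⟨a * a', by rw [k, ← h]⟩
    · exact ⟨x, by simpa only [mul_assoc] using hx.symm⟩
  obtain ⟨y', hy'⟩ : ∃ y, a * (a' * (a * y)) = a := by
    rcases hR2' with h | ⟨x, hx⟩
    · have k : a * (a' * a) = a := by rw [← mul_assoc]; exact h.symm
      exact ⟨a' * a, by rw [k, k]⟩
    · exact ⟨x, by simpa only [mul_assoc] using hx.symm⟩
  obtain ⟨x'', hx''⟩ : ∃ x, x * (a * (a'' * a)) = a := by
    rcases hL2'' with h | ⟨x, hx⟩
    · have k : a * (a'' * a) = a := by rw [← mul_assoc]; exact h.symm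
      exact ⟨a * a'', by rw [k, ← h]⟩
    · exact ⟨x, by simpa only [mul_assoc] using hx.symm⟩
  obtain ⟨y'', hy''⟩ : ∃ y, a * (a'' * (a * y)) = a := by
    rcases hR2'' with h | ⟨x, hx⟩
    · have k : a * (a'' * a) = a := by rw [← mul_assoc]; exact h.symm
      exact ⟨a'' * a, by rw [k, k]⟩
    · exact ⟨x, by simpa only [mul_assoc] using hx.symm⟩
  -- parametric versions
  have hX'p : ∀ s : S, x' * (a * (a' * (a * s))) = a * s := fun s => by
    have := congrArg (fun t => t * s) hx'
    simpa only [mul_assoc] using this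
  have hY'p : ∀ s : S, a * (a' * (a * (y' * s))) = a * s := fun s => by
    have := congrArg (fun t => t * s) hy'
    simpa only [mul_assoc] using this
  have hX''p : ∀ s : S, x'' * (a * (a'' * (a * s))) = a * s := fun s => by
    have := congrArg (fun t => t * s) hx''
    simpa only [mul_assoc] using this
  have hY''p : ∀ s : S, a * (a'' * (a * (y'' * s))) = a * s := fun s => by
    have := congrArg (fun t => t * s) hy''
    simpa only [mul_assoc] using this
  refine ⟨?_, ?_, ?_, ?_⟩
  · -- a'*a group invertible
    refine grp_aux (a' * a) (a' * (x' * (x' * a))) y' ?_ ?_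
    · simp only [mul_assoc]; rw [hy']
    · simp only [mul_assoc]; rw [hX'p, hx']
  · -- a*a' group invertible
    refine grp_aux (a * a') x' (a * (y' * (y' * a'))) ?_ ?_
    · simp only [mul_assoc]; rw [hY'p, hY'p]
    · simp only [mul_assoc]; rw [hX'p]
  · -- grH (a * w * a) a
    refine ⟨⟨Or.inr ⟨a * (a' * a * a''), rfl⟩,
             Or.inr ⟨a' * a * a'' * a, mul_assoc a _ a⟩⟩,
           Or.inr ⟨x'' * x', ?_⟩, Or.inr ⟨y'' * y', ?_⟩⟩
    · simp only [mul_assoc]; rw [hX'p, hx'']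
    · simp only [mul_assoc]; rw [hY''p, hy']
  · -- grH (w * a * w) w
    refine ⟨⟨Or.inr ⟨a' * a * a'' * a, rfl⟩,
             Or.inr ⟨a * (a' * a * a''), mul_assoc _ a _⟩⟩,
           Or.inr ⟨a' * (x' * (x'' * (x' * a))), ?_⟩,
           Or.inr ⟨a * (y'' * (y' * (y'' * a''))), ?_⟩⟩
    · simp only [mul_assoc]; rw [hX'p, hX''p, hX'p]
    · simp only [mul_assoc]; rw [hY''p, hY'p, hY''p]
end

section
/- A semigroup S is regular if and only if for every a ∈ S the set A(a)[H] = {x ∈ S : axa H a} is nonempty. -/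
variable {S : Type*} [Semigroup S]

theorem stmt6 :
    (∀ a : S, ∃ x : S, a = a * x * a) ↔ (∀ a : S, ∃ x : S, grH (a * x * a) a) := by
  constructor
  · intro h a
    obtain ⟨x, hx⟩ := h a
    exact ⟨x, ⟨⟨Or.inl hx.symm, Or.inl hx.symm⟩, ⟨Or.inl hx, Or.inl hx⟩⟩⟩
  · intro h a
    obtain ⟨x, ⟨_, ⟨hL, hR⟩⟩⟩ := h a
    rcases hL with hL | ⟨s, hs⟩
    · exact ⟨x, hL⟩
    rcases hR with hR | ⟨t, ht⟩
    · exact ⟨x, hR⟩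
    refine ⟨x * s, ?_⟩
    have : a = a * x * (s * (a * x * a)) * t := by rw [← hs]; exact ht
    calc a = a * x * (s * (a * x * a)) * t := this
      _ = a * (x * s) * a * (x * a * t) := by simp only [mul_assoc]
      _ = a * (x * s) * (a * x * a * t) := by simp only [mul_assoc]
      _ = a * (x * s) * a := by rw [← ht]
end

section
/- Let S be a semigroup such that ab H ba for all group invertible a, b ∈ S. Then the idempotents of S commute: ef = fe for all e, f ∈ E(S). -/
variable {S : Type*} [Semigroup S]

theorem stmt8
    (h : ∀ a b : S, GrpInvertible a → GrpInvertible b → grH (a * b) (b * a)) :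
    ∀ e f : S, e * e = e → f * f = f → e * f = f * e := by
  intro e f he hf
  have hH := h e f ⟨e, rfl, by rw [he, he], by rw [he, he]⟩
    ⟨f, rfl, by rw [hf, hf], by rw [hf, hf]⟩
  -- f * (e * f) = e * f, from e*f ≤_R f*e
  have h1 : f * (e * f) = e * f := by
    rcases hH.1.2 with heq | ⟨x, hx⟩
    · rw [heq, ← mul_assoc, hf]
    · rw [hx, ← mul_assoc, ← mul_assoc, hf]
  -- (f * e) * f = f * e, from f*e ≤_L e*f
  have h2 : (f * e) * f = f * e := by
    rcases hH.2.1 with heq | ⟨x, hx⟩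
    · rw [heq, mul_assoc, hf]
    · rw [hx, mul_assoc, mul_assoc, hf]
  calc e * f = f * (e * f) := h1.symm
    _ = (f * e) * f := (mul_assoc f e f).symm
    _ = f * e := h2
end

section
/- Let S be a semigroup. The following are equivalent: (1) for all a, b ∈ S, a' ∈ V(a)[H] and b' ∈ V(b)[H] imply b'a' ∈ V(ab)[H]; (2) the set ℋ(S) of group invertible elements of S is closed under multiplication. -/
variable {S : Type*} [Semigroup S]

private lemma isGrpInv_of_idem (a : S) (h : a = a * a) : IsGrpInv a a := by
  refine ⟨rfl, ?_, ?_⟩ <;> rw [← h, ← h]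

/-- Lemma B: if `a = u a²` and `a = a² v` then `a` is group invertible. -/
private lemma grpinv_of (a u v : S) (h1 : a = u * (a * a)) (h2 : a = (a * a) * v) :
    GrpInvertible a := by
  have h2' : a * (a * v) = a := by rw [← mul_assoc]; exact h2.symm
  have h1' : u * (a * a) = a := h1.symm
  have k1 : a * v = u * a := by
    conv_lhs => rw [h1]
    rw [mul_assoc, mul_assoc, h2']
  have xe2 : (u * a) * v = (a * v) * v := by rw [k1]
  have ax : a * ((u * a) * v) = a * v := by
    rw [xe2, ← mul_assoc, h2']
  have xe1 : (u * a) * v = u * (u * a) := by rw [mul_assoc u a v, k1]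
  have xa : ((u * a) * v) * a = u * a := by
    rw [xe1, mul_assoc u (u*a) a, mul_assoc u a a, h1']
  refine ⟨(u * a) * v, ?_, ?_, ?_⟩
  · rw [ax, xa, k1]
  · rw [ax, k1, mul_assoc, h1']
  · rw [xa, xe2, ← mul_assoc (u*a) (a*v) v, mul_assoc u a (a*v), h2', k1]

private lemma grpinv_of' (a : S) (hL : leL a (a * a)) (hR : leR a (a * a)) :
    GrpInvertible a := by
  rcases hL with h | ⟨u, hu⟩
  · exact ⟨a, isGrpInv_of_idem a h⟩
  rcases hR with h | ⟨v, hv⟩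
  · exact ⟨a, isGrpInv_of_idem a h⟩
  exact grpinv_of a u v hu hv

private lemma VH_symm {a x : S} (h : VH a x) : VH x a := ⟨h.2, h.1⟩

/-- From `VH c x`, the element `x*c` is group invertible. -/
private lemma grpinv_right {c x : S} (hv : VH c x) : GrpInvertible (x * c) := by
  apply grpinv_of' (x * c)
  · rcases hv.2.2.1 with h | ⟨u, hu⟩
    · left
      calc x * c = ((x * c) * x) * c := by rw [← h]
        _ = (x * c) * (x * c) := by rw [mul_assoc]
    · right
      refine ⟨u, ?_⟩
      calc x * c = (u * ((x * c) * x)) * c := by rw [← hu]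
        _ = u * (((x * c) * x) * c) := by rw [mul_assoc]
        _ = u * ((x * c) * (x * c)) := by rw [mul_assoc (x*c)]
  · rcases hv.1.2.2 with h | ⟨t, ht⟩
    · left
      calc x * c = x * ((c * x) * c) := by rw [← h]
        _ = (x * (c * x)) * c := by rw [← mul_assoc]
        _ = ((x * c) * x) * c := by rw [← mul_assoc]
        _ = (x * c) * (x * c) := by rw [mul_assoc]
    · right
      refine ⟨t, ?_⟩
      calc x * c = x * (((c * x) * c) * t) := by rw [← ht]
        _ = (x * ((c * x) * c)) * t := by rw [← mul_assoc]
        _ = ((x * (c * x)) * c) * t := by rw [← mul_assoc x (c*x) c]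
        _ = (((x * c) * x) * c) * t := by rw [← mul_assoc x c x]
        _ = ((x * c) * (x * c)) * t := by rw [mul_assoc (x*c) x c]

/-- From `VH c x`, the element `c*x` is group invertible. -/
private lemma grpinv_left {c x : S} (hv : VH c x) : GrpInvertible (c * x) := by
  apply grpinv_of' (c * x)
  · rcases hv.1.2.1 with h | ⟨u, hu⟩
    · left
      calc c * x = ((c * x) * c) * x := by rw [← h]
        _ = (c * x) * (c * x) := by rw [mul_assoc]
    · right
      refine ⟨u, ?_⟩
      calc c * x = (u * ((c * x) * c)) * x := by rw [← hu]
        _ = u * (((c * x) * c) * x) := by rw [mul_assoc]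
        _ = u * ((c * x) * (c * x)) := by rw [mul_assoc (c*x)]
  · rcases hv.2.2.2 with h | ⟨t, ht⟩
    · left
      calc c * x = c * ((x * c) * x) := by rw [← h]
        _ = (c * (x * c)) * x := by rw [← mul_assoc]
        _ = ((c * x) * c) * x := by rw [← mul_assoc]
        _ = (c * x) * (c * x) := by rw [mul_assoc]
    · right
      refine ⟨t, ?_⟩
      calc c * x = c * (((x * c) * x) * t) := by rw [← ht]
        _ = (c * ((x * c) * x)) * t := by rw [← mul_assoc]
        _ = ((c * (x * c)) * x) * t := by rw [← mul_assoc c (x*c) x]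
        _ = (((c * x) * c) * x) * t := by rw [← mul_assoc c x c]
        _ = ((c * x) * (c * x)) * t := by rw [mul_assoc (c*x) c x]

/-- The key half for direction (2) → (1). -/
private lemma key_half
    (hcl : ∀ x y : S, GrpInvertible x → GrpInvertible y → GrpInvertible (x * y))
    (a b a' b' : S) (hva : VH a a') (hvb : VH b b') :
    (∃ σ : S, a * b = ((a * b) * (b' * a')) * σ) ∧
    (∃ σ : S, a * b = σ * ((b' * a') * (a * b))) := by
  obtain ⟨Q, hQc, hQ2, hQ3⟩ := grpinv_right hva   -- group inverse of a'*a
  obtain ⟨P, hPc, hP2, hP3⟩ := grpinv_left hvb     -- group inverse of b*b'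
  obtain ⟨K, hKc, hK2, hK3⟩ :=
    hcl ((a' * a)) ((b * b')) (grpinv_right hva) (grpinv_left hvb)
  -- witness: a = w * (a'*a)
  obtain ⟨w, hw⟩ : ∃ w : S, a = w * (a' * a) := by
    rcases hva.1.2.1 with h | ⟨u, hu⟩
    · exact ⟨a, by calc a = (a * a') * a := h
        _ = a * (a' * a) := by rw [mul_assoc]⟩
    · exact ⟨u * a, by calc a = u * ((a * a') * a) := hu
        _ = u * (a * (a' * a)) := by rw [mul_assoc a a' a]
        _ = (u * a) * (a' * a) := by rw [← mul_assoc]⟩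
  -- witness: b = (b*b') * n
  obtain ⟨n, hn⟩ : ∃ n : S, b = (b * b') * n := by
    rcases hvb.1.2.2 with h | ⟨t, ht⟩
    · exact ⟨b, h⟩
    · exact ⟨b * t, by calc b = ((b * b') * b) * t := ht
        _ = (b * b') * (b * t) := by rw [mul_assoc]⟩
  have aF : a * (Q * (a' * a)) = a := by
    calc a * (Q * (a' * a)) = (w * (a' * a)) * (Q * (a' * a)) := by rw [← hw]
      _ = w * ((a' * a) * (Q * (a' * a))) := by rw [mul_assoc]
      _ = w * (((a' * a) * Q) * (a' * a)) := by rw [← mul_assoc (a'*a) Q (a'*a)]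
      _ = w * (a' * a) := by rw [hQ2]
      _ = a := hw.symm
  have Eb : ((b * b') * P) * b = b := by
    calc ((b * b') * P) * b = ((b * b') * P) * ((b * b') * n) := by rw [← hn]
      _ = (((b * b') * P) * (b * b')) * n := by rw [← mul_assoc]
      _ = (b * b') * n := by rw [hP2]
      _ = b := hn.symm
  have chain1 : a * (b * b') = (a * Q) * ((a' * a) * (b * b')) := by
    calc a * (b * b') = (a * (Q * (a' * a))) * (b * b') := by rw [aF]
      _ = ((a * Q) * (a' * a)) * (b * b') := by rw [← mul_assoc a Q (a'*a)]
      _ = (a * Q) * ((a' * a) * (b * b')) := by rw [mul_assoc]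
  have hKmid : ((a' * a) * (b * b')) * (K * ((a' * a) * (b * b'))) = (a' * a) * (b * b') := by
    rw [← mul_assoc]; exact hK2
  have chain2 : a * (b * b') =
      ((a * (b * b')) * (a' * a)) * ((b * b') * K) := by
    calc a * (b * b') = (a * Q) * ((a' * a) * (b * b')) := chain1
      _ = (a * Q) * (((a' * a) * (b * b')) * (K * ((a' * a) * (b * b')))) := by
          rw [hKmid]
      _ = ((a * Q) * ((a' * a) * (b * b'))) * (K * ((a' * a) * (b * b'))) := by
          rw [← mul_assoc]
      _ = (a * (b * b')) * (K * ((a' * a) * (b * b'))) := by rw [← chain1]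
      _ = (a * (b * b')) * (((a' * a) * (b * b')) * K) := by rw [← hKc]
      _ = (a * (b * b')) * ((a' * a) * ((b * b') * K)) := by
          rw [mul_assoc (a'*a) (b*b') K]
      _ = ((a * (b * b')) * (a' * a)) * ((b * b') * K) := by rw [← mul_assoc]
  have chain3 : (a * (b * b')) * (a' * a) = ((a * b) * (b' * a')) * a := by
    simp only [mul_assoc]
  have finalR : a * b = ((a * b) * (b' * a')) * (a * (((b * b') * K) * n)) := by
    calc a * b = a * ((b * b') * n) := by rw [← hn]
      _ = (a * (b * b')) * n := by rw [← mul_assoc]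
      _ = (((a * (b * b')) * (a' * a)) * ((b * b') * K)) * n := by
          conv_lhs => rw [chain2]
      _ = ((a * (b * b')) * (a' * a)) * (((b * b') * K) * n) := by rw [mul_assoc]
      _ = (((a * b) * (b' * a')) * a) * (((b * b') * K) * n) := by rw [chain3]
      _ = ((a * b) * (b' * a')) * (a * (((b * b') * K) * n)) := by rw [mul_assoc]
  have chain4 : (a' * a) * b = ((a' * a) * (b * b')) * (P * b) := by
    calc (a' * a) * b = (a' * a) * (((b * b') * P) * b) := by
          conv_lhs => rw [← Eb]
      _ = (a' * a) * ((b * b') * (P * b)) := by rw [mul_assoc (b*b') P b]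
      _ = ((a' * a) * (b * b')) * (P * b) := by rw [← mul_assoc]
  have chain5 : (a' * a) * b =
      (K * (a' * a)) * ((b * b') * ((a' * a) * b)) := by
    calc (a' * a) * b = ((a' * a) * (b * b')) * (P * b) := chain4
      _ = ((((a' * a) * (b * b')) * K) * ((a' * a) * (b * b'))) * (P * b) := by
          conv_lhs => rw [← hK2]
      _ = (((a' * a) * (b * b')) * K) * (((a' * a) * (b * b')) * (P * b)) := by
          rw [mul_assoc]
      _ = (((a' * a) * (b * b')) * K) * ((a' * a) * b) := by rw [← chain4]
      _ = (K * ((a' * a) * (b * b'))) * ((a' * a) * b) := by rw [hKc]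
      _ = K * (((a' * a) * (b * b')) * ((a' * a) * b)) := by rw [mul_assoc]
      _ = K * ((a' * a) * ((b * b') * ((a' * a) * b))) := by
          rw [mul_assoc (a'*a) (b*b') ((a'*a)*b)]
      _ = (K * (a' * a)) * ((b * b') * ((a' * a) * b)) := by rw [← mul_assoc]
  have chain6 : (b * b') * ((a' * a) * b) = b * ((b' * a') * (a * b)) := by
    simp only [mul_assoc]
  have finalL : a * b = (w * ((K * (a' * a)) * b)) * ((b' * a') * (a * b)) := by
    calc a * b = (w * (a' * a)) * b := by rw [← hw]
      _ = w * ((a' * a) * b) := by rw [mul_assoc]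
      _ = w * ((K * (a' * a)) * ((b * b') * ((a' * a) * b))) := by
          conv_lhs => rw [chain5]
      _ = w * ((K * (a' * a)) * (b * ((b' * a') * (a * b)))) := by rw [chain6]
      _ = w * (((K * (a' * a)) * b) * ((b' * a') * (a * b))) := by
          rw [← mul_assoc (K*(a'*a)) b ((b'*a')*(a*b))]
      _ = (w * ((K * (a' * a)) * b)) * ((b' * a') * (a * b)) := by rw [← mul_assoc]
  exact ⟨⟨a * (((b * b') * K) * n), finalR⟩, ⟨w * ((K * (a' * a)) * b), finalL⟩⟩

theorem stmt9 :
    (∀ a b a' b' : S, VH a a' → VH b b' → VH (a * b) (b' * a')) ↔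
    (∀ a b : S, GrpInvertible a → GrpInvertible b → GrpInvertible (a * b)) := by
  constructor
  · -- (1) → (2)
    intro h1 a b ha hb
    obtain ⟨a', ha1, ha2, ha3⟩ := ha
    obtain ⟨b', hb1, hb2, hb3⟩ := hb
    have ae : a * (a * a') = a := by rw [ha1, ← mul_assoc]; exact ha2
    have bf : b * (b * b') = b := by rw [hb1, ← mul_assoc]; exact hb2
    have hae : VH a (a * a') := by
      constructor
      · rw [ae]
        refine ⟨⟨Or.inr ⟨a, rfl⟩, Or.inr ⟨a, rfl⟩⟩, ⟨Or.inr ⟨a', ?_⟩, Or.inr ⟨a', ?_⟩⟩⟩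
        · calc a = (a * a') * a := ha2.symm
            _ = (a' * a) * a := by rw [ha1]
            _ = a' * (a * a) := by rw [mul_assoc]
        · rw [mul_assoc, ae]
      · rw [ha2, ae]
        exact ⟨⟨Or.inr ⟨a, ae.symm⟩, Or.inr ⟨a, ha2.symm⟩⟩,
          ⟨Or.inr ⟨a', ha1⟩, Or.inr ⟨a', rfl⟩⟩⟩
    have hbf : VH b (b * b') := by
      constructor
      · rw [bf]
        refine ⟨⟨Or.inr ⟨b, rfl⟩, Or.inr ⟨b, rfl⟩⟩, ⟨Or.inr ⟨b', ?_⟩, Or.inr ⟨b', ?_⟩⟩⟩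
        · calc b = (b * b') * b := hb2.symm
            _ = (b' * b) * b := by rw [hb1]
            _ = b' * (b * b) := by rw [mul_assoc]
        · rw [mul_assoc, bf]
      · rw [hb2, bf]
        exact ⟨⟨Or.inr ⟨b, bf.symm⟩, Or.inr ⟨b, hb2.symm⟩⟩,
          ⟨Or.inr ⟨b', hb1⟩, Or.inr ⟨b', rfl⟩⟩⟩
    have hv := h1 a b (a * a') (b * b') hae hbf
    have key : (a * b) * ((b * b') * (a * a')) * (a * b) = (a * b) * (a * b) := by
      have s1 : (a * b) * ((b * b') * (a * a')) = (a * b) * (a * a') := by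
        rw [← mul_assoc, mul_assoc a b (b*b'), bf]
      rw [s1, mul_assoc (a*b) (a*a') (a*b), ← mul_assoc (a*a') a b, ha2]
    have hL := hv.1.2.1
    have hR := hv.1.2.2
    rw [key] at hL hR
    exact grpinv_of' (a * b) hL hR
  · -- (2) → (1)
    intro hcl a b a' b' hva hvb
    obtain ⟨⟨σ₁, e1⟩, ⟨σ₂, e2⟩⟩ := key_half hcl a b a' b' hva hvb
    obtain ⟨⟨σ₃, e3⟩, ⟨σ₄, e4⟩⟩ := key_half hcl b' a' b a (VH_symm hvb) (VH_symm hva)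
    -- e1 : a*b = ((a*b)*(b'*a'))*σ₁
    -- e2 : a*b = σ₂*((b'*a')*(a*b))
    -- e3 : b'*a' = ((b'*a')*(a*b))*σ₃
    -- e4 : b'*a' = σ₄*((a*b)*(b'*a'))
    constructor
    · -- grH ((a*b)*(b'*a')*(a*b)) (a*b)
      constructor
      · exact ⟨Or.inr ⟨(a*b)*(b'*a'), rfl⟩,
          Or.inr ⟨(b'*a')*(a*b), by rw [mul_assoc]⟩⟩
      · constructor
        · -- leL (a*b) (cyc)
          refine Or.inr ⟨σ₂ * σ₄, ?_⟩
          calc a * b = σ₂ * ((b' * a') * (a * b)) := e2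
            _ = σ₂ * ((σ₄ * ((a * b) * (b' * a'))) * (a * b)) := by rw [← e4]
            _ = σ₂ * (σ₄ * (((a * b) * (b' * a')) * (a * b))) := by
                rw [mul_assoc σ₄ ((a*b)*(b'*a')) (a*b)]
            _ = (σ₂ * σ₄) * (((a * b) * (b' * a')) * (a * b)) := by rw [← mul_assoc]
        · -- leR (a*b) (cyc)
          refine Or.inr ⟨σ₃ * σ₁, ?_⟩
          calc a * b = ((a * b) * (b' * a')) * σ₁ := e1
            _ = ((a * b) * (((b' * a') * (a * b)) * σ₃)) * σ₁ := by rw [← e3]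
            _ = (((a * b) * ((b' * a') * (a * b))) * σ₃) * σ₁ := by
                rw [← mul_assoc (a*b) ((b'*a')*(a*b)) σ₃]
            _ = ((((a * b) * (b' * a')) * (a * b)) * σ₃) * σ₁ := by
                rw [← mul_assoc (a*b) (b'*a') (a*b)]
            _ = (((a * b) * (b' * a')) * (a * b)) * (σ₃ * σ₁) := by rw [mul_assoc]
    · -- grH ((b'*a')*(a*b)*(b'*a')) (b'*a')
      constructor
      · exact ⟨Or.inr ⟨(b'*a')*(a*b), rfl⟩,
          Or.inr ⟨(a*b)*(b'*a'), by rw [mul_assoc]⟩⟩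
      · constructor
        · -- leL (b'*a') (ycy)
          refine Or.inr ⟨σ₄ * σ₂, ?_⟩
          calc b' * a' = σ₄ * ((a * b) * (b' * a')) := e4
            _ = σ₄ * ((σ₂ * ((b' * a') * (a * b))) * (b' * a')) := by rw [← e2]
            _ = σ₄ * (σ₂ * (((b' * a') * (a * b)) * (b' * a'))) := by
                rw [mul_assoc σ₂ ((b'*a')*(a*b)) (b'*a')]
            _ = (σ₄ * σ₂) * (((b' * a') * (a * b)) * (b' * a')) := by rw [← mul_assoc]
        · -- leR (b'*a') (ycy)
          refine Or.inr ⟨σ₁ * σ₃, ?_⟩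
          calc b' * a' = ((b' * a') * (a * b)) * σ₃ := e3
            _ = ((b' * a') * (((a * b) * (b' * a')) * σ₁)) * σ₃ := by rw [← e1]
            _ = (((b' * a') * ((a * b) * (b' * a'))) * σ₁) * σ₃ := by
                rw [← mul_assoc (b'*a') ((a*b)*(b'*a')) σ₁]
            _ = ((((b' * a') * (a * b)) * (b' * a')) * σ₁) * σ₃ := by
                rw [← mul_assoc (b'*a') (a*b) (b'*a')]
            _ = (((b' * a') * (a * b)) * (b' * a')) * (σ₁ * σ₃) := by rw [mul_assoc]
end

section
/- Let S be a semigroup. Then: (1) if the set ℋ(S) of group invertible elements is closed under multiplication, then S is H-inverse-closed; (2) if S is an inverse semigroup, then S is H-inverse-closed. -/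
variable {S : Type*} [Semigroup S]

private lemma extr {a b c : S} (h : a * b = c) (z : S) : a * (b * z) = c * z := by
  rw [← mul_assoc, h]

private lemma core_lemma (e a L R : S) (he : e * e = e) (hae : a * e = a)
    (hea : e * a = a) (hLa : L * a = e) (haR : a * R = e) :
    ∃ g : S, a * g = g * a ∧ a * g * a = a ∧ g * a * g = g := by
  have hLeR : L * e = e * R := by
    calc L * e = L * (a * R) := by rw [haR]
    _ = L * a * R := by rw [mul_assoc]
    _ = e * R := by rw [hLa]
  have c1 : a * (e * R) = e := by
    calc a * (e * R) = a * e * R := by rw [mul_assoc]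
    _ = a * R := by rw [hae]
    _ = e := haR
  have c2 : (e * R) * a = e := by
    calc (e * R) * a = L * e * a := by rw [hLeR]
    _ = L * (e * a) := by rw [mul_assoc]
    _ = L * a := by rw [hea]
    _ = e := hLa
  refine ⟨e * R, by rw [c1, c2], by rw [c1, hea], ?_⟩
  rw [c2, ← mul_assoc, he]

private lemma sqinv (a u v : S) (hu : a = u * (a * a)) (hv : a = a * a * v) :
    ∃ g : S, a * g = g * a ∧ a * g * a = a ∧ g * a * g = g := by
  have hev : u * a = a * v := by
    conv_lhs => rw [hv]
    conv_rhs => rw [hu]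
    simp only [mul_assoc]
  have he : (u * a) * (u * a) = u * a := by
    calc (u * a) * (u * a) = (u * a) * (a * v) := by rw [hev]
    _ = u * (a * a * v) := by simp only [mul_assoc]
    _ = u * a := by rw [← hv]
  have hae : a * (u * a) = a := by
    calc a * (u * a) = a * (a * v) := by rw [hev]
    _ = a * a * v := by rw [mul_assoc]
    _ = a := hv.symm
  have hea : (u * a) * a = a := by
    calc (u * a) * a = u * (a * a) := by rw [mul_assoc]
    _ = a := hu.symm
  exact core_lemma (u * a) a u v he hae hea rfl hev.symm

private lemma idem_grp {a : S} (h : a * a = a) :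
    ∃ g : S, a * g = g * a ∧ a * g * a = a ∧ g * a * g = g :=
  ⟨a, rfl, by rw [h, h], by rw [h, h]⟩

private lemma hclass_grp {h a : S} (hg : ∃ g : S, h * g = g * h ∧ h * g * h = h ∧ g * h * g = g)
    (h1 : a = h ∨ ∃ u, a = u * h) (h2 : a = h ∨ ∃ v, a = h * v)
    (h3 : h = a ∨ ∃ p, h = p * a) (h4 : h = a ∨ ∃ q, h = a * q) :
    ∃ g : S, a * g = g * a ∧ a * g * a = a ∧ g * a * g = g := by
  obtain ⟨h', c1, c2, c3⟩ := hg
  rcases h1 with rfl | ⟨u, hu⟩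
  · exact ⟨h', c1, c2, c3⟩
  rcases h2 with rfl | ⟨v, hv⟩
  · exact ⟨h', c1, c2, c3⟩
  rcases h3 with rfl | ⟨p, hp⟩
  · exact ⟨h', c1, c2, c3⟩
  rcases h4 with rfl | ⟨q, hq⟩
  · exact ⟨h', c1, c2, c3⟩
  refine core_lemma (h * h') a (h' * p) (q * h') ?_ ?_ ?_ ?_ ?_
  · calc (h * h') * (h * h') = h * (h' * h * h') := by simp only [mul_assoc]
    _ = h * h' := by rw [c3]
  · calc a * (h * h') = a * (h' * h) := by rw [c1]
    _ = (u * h) * (h' * h) := by rw [← hu]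
    _ = u * (h * h' * h) := by simp only [mul_assoc]
    _ = u * h := by rw [c2]
    _ = a := hu.symm
  · calc (h * h') * a = (h * h') * (h * v) := by rw [← hv]
    _ = (h * h' * h) * v := by simp only [mul_assoc]
    _ = h * v := by rw [c2]
    _ = a := hv.symm
  · calc (h' * p) * a = h' * (p * a) := by rw [mul_assoc]
    _ = h' * h := by rw [← hp]
    _ = h * h' := c1.symm
  · calc a * (q * h') = (a * q) * h' := by rw [mul_assoc]
    _ = h * h' := by rw [← hq]

private lemma assoc_grp {h x : S} (hl : h = h * x * h ∨ ∃ t, h = t * (h * x * h))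
    (hr : h = h * x * h ∨ ∃ s, h = (h * x * h) * s) :
    (∃ g : S, (h*x) * g = g * (h*x) ∧ (h*x) * g * (h*x) = h*x ∧ g * (h*x) * g = g) ∧
    (∃ g : S, (x*h) * g = g * (x*h) ∧ (x*h) * g * (x*h) = x*h ∧ g * (x*h) * g = g) := by
  have idemcase : h = h * x * h →
      (∃ g : S, (h*x) * g = g * (h*x) ∧ (h*x) * g * (h*x) = h*x ∧ g * (h*x) * g = g) ∧
      (∃ g : S, (x*h) * g = g * (x*h) ∧ (x*h) * g * (x*h) = x*h ∧ g * (x*h) * g = g) := by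
    intro heq
    constructor
    · apply idem_grp
      calc (h*x)*(h*x) = (h*x*h)*x := by simp only [mul_assoc]
      _ = h*x := by rw [← heq]
    · apply idem_grp
      calc (x*h)*(x*h) = x*(h*x*h) := by simp only [mul_assoc]
      _ = x*h := by rw [← heq]
  rcases hl with heq | ⟨t, ht⟩
  · exact idemcase heq
  rcases hr with heq | ⟨s, hs⟩
  · exact idemcase heq
  have ht' : ∀ z, t * (h * (x * (h * z))) = h * z := fun z => by
    conv_rhs => rw [ht]
    simp only [mul_assoc]
  have hs' : ∀ z, h * (x * (h * (s * z))) = h * z := fun z => by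
    conv_rhs => rw [hs]
    simp only [mul_assoc]
  have ht'' : t * (h * (x * h)) = h := by
    conv_rhs => rw [ht]
    simp only [mul_assoc]
  have hs'' : h * (x * (h * s)) = h := by
    conv_rhs => rw [hs]
    simp only [mul_assoc]
  constructor
  · apply sqinv (h*x) t (h*(s*(s*x)))
    · show h * x = t * ((h*x)*(h*x))
      simp only [mul_assoc]
      rw [ht']
    · show h * x = (h*x)*(h*x)*(h*(s*(s*x)))
      simp only [mul_assoc]
      rw [hs' (s*x), hs' x]
  · apply sqinv (x*h) (x*(t*(t*h))) s
    · show x * h = (x*(t*(t*h))) * ((x*h)*(x*h))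
      simp only [mul_assoc]
      rw [ht' (x*h)]
      rw [ht'']
    · show x * h = (x*h)*(x*h)*s
      simp only [mul_assoc]
      rw [hs'']


section STsec
variable (st : S → S)

private lemma ef_idem (p1 : ∀ a : S, a * st a * a = a) (p2 : ∀ a : S, st a * a * st a = st a)
    (uq : ∀ a y : S, a * y * a = a → y * a * y = y → y = st a)
    (e f : S) (he : e * e = e) (hf : f * f = f) : (e * f) * (e * f) = e * f := by
  have he' : ∀ z, e * (e * z) = e * z := fun z => by rw [← mul_assoc, he]
  have hf' : ∀ z, f * (f * z) = f * z := fun z => by rw [← mul_assoc, hf]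
  have hy1 : (e*f) * (st (e*f)) * (e*f) = e*f := p1 (e*f)
  have hy2 : (st (e*f)) * (e*f) * (st (e*f)) = st (e*f) := p2 (e*f)
  have hy2' : ∀ z, st (e*f) * (e * (f * (st (e*f) * z))) = st (e*f) * z := fun z => by
    calc st (e*f) * (e * (f * (st (e*f) * z))) = (st (e*f) * (e*f) * st (e*f)) * z := by
          simp only [mul_assoc]
    _ = st (e*f) * z := by rw [hy2]
  have g1 : (e*f) * (f * (st (e*f) * e)) * (e*f) = e*f := by
    calc (e*f) * (f * (st (e*f) * e)) * (e*f) = (e*f) * (st (e*f)) * (e*f) := by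
          simp only [mul_assoc, he', hf']
    _ = e*f := hy1
  have g2 : (f * (st (e*f) * e)) * (e*f) * (f * (st (e*f) * e)) = f * (st (e*f) * e) := by
    calc (f * (st (e*f) * e)) * (e*f) * (f * (st (e*f) * e))
        = f * (st (e*f) * (e * (f * (st (e*f) * e)))) := by simp only [mul_assoc, he', hf']
    _ = f * (st (e*f) * e) := by rw [hy2' e]
  have gg : (f * (st (e*f) * e)) * (f * (st (e*f) * e)) = f * (st (e*f) * e) := by
    calc (f * (st (e*f) * e)) * (f * (st (e*f) * e))
        = f * (st (e*f) * (e * (f * (st (e*f) * e)))) := by simp only [mul_assoc]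
    _ = f * (st (e*f) * e) := by rw [hy2' e]
  have hgy : f * (st (e*f) * e) = st (e*f) := uq (e*f) _ g1 g2
  have yy : st (e*f) * st (e*f) = st (e*f) := by rw [← hgy]; exact gg
  have h1 : e*f = st (st (e*f)) := uq (st (e*f)) (e*f) hy2 hy1
  have h2 : st (e*f) = st (st (e*f)) := uq (st (e*f)) (st (e*f)) (by rw [yy, yy]) (by rw [yy, yy])
  have key : e*f = st (e*f) := h1.trans h2.symm
  rw [key]
  exact yy

private lemma idem_comm (p1 : ∀ a : S, a * st a * a = a) (p2 : ∀ a : S, st a * a * st a = st a)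
    (uq : ∀ a y : S, a * y * a = a → y * a * y = y → y = st a)
    (e f : S) (he : e * e = e) (hf : f * f = f) : e * f = f * e := by
  have he' : ∀ z, e * (e * z) = e * z := fun z => by rw [← mul_assoc, he]
  have hf' : ∀ z, f * (f * z) = f * z := fun z => by rw [← mul_assoc, hf]
  have hef : (e*f)*(e*f) = e*f := ef_idem st p1 p2 uq e f he hf
  have hfe : (f*e)*(f*e) = f*e := ef_idem st p1 p2 uq f e hf he
  have a1 : (e*f)*(f*e)*(e*f) = e*f := by
    calc (e*f)*(f*e)*(e*f) = (e*f)*(e*f) := by simp only [mul_assoc, he', hf']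
    _ = e*f := hef
  have a2 : (f*e)*(e*f)*(f*e) = f*e := by
    calc (f*e)*(e*f)*(f*e) = (f*e)*(f*e) := by simp only [mul_assoc, he', hf']
    _ = f*e := hfe
  have b1 : f*e = st (e*f) := uq _ _ a1 a2
  have b2 : e*f = st (e*f) := uq _ _ (by rw [hef, hef]) (by rw [hef, hef])
  rw [b1]; exact b2

private lemma st_mul (p1 : ∀ a : S, a * st a * a = a) (p2 : ∀ a : S, st a * a * st a = st a)
    (uq : ∀ a y : S, a * y * a = a → y * a * y = y → y = st a)
    (a b : S) : st (a * b) = st b * st a := by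
  have ib : (b * st b) * (b * st b) = b * st b := by rw [← mul_assoc, p1]
  have ia : (st a * a) * (st a * a) = st a * a := by
    calc (st a * a) * (st a * a) = (st a * a * st a) * a := by simp only [mul_assoc]
    _ = st a * a := by rw [p2]
  have c : (b * st b) * (st a * a) = (st a * a) * (b * st b) :=
    idem_comm st p1 p2 uq _ _ ib ia
  have r1' : (a*b) * (st b * st a) * (a*b) = a*b := by
    calc (a*b) * (st b * st a) * (a*b) = a * (((b * st b) * (st a * a)) * b) := by
          simp only [mul_assoc]
    _ = a * (((st a * a) * (b * st b)) * b) := by rw [c]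
    _ = (a * st a * a) * (b * st b * b) := by simp only [mul_assoc]
    _ = a*b := by rw [p1, p1]
  have r2' : (st b * st a) * (a*b) * (st b * st a) = st b * st a := by
    calc (st b * st a) * (a*b) * (st b * st a)
        = st b * (((st a * a) * (b * st b)) * st a) := by simp only [mul_assoc]
    _ = st b * (((b * st b) * (st a * a)) * st a) := by rw [c]
    _ = (st b * b * st b) * (st a * a * st a) := by simp only [mul_assoc]
    _ = st b * st a := by rw [p2, p2]
  exact (uq (a*b) (st b * st a) r1' r2').symm

private lemma st_R (p1 : ∀ a : S, a * st a * a = a) (p2 : ∀ a : S, st a * a * st a = st a)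
    (uq : ∀ a y : S, a * y * a = a → y * a * y = y → y = st a)
    (a b : S) (hab : a = b ∨ ∃ t, a = b * t) (hba : b = a ∨ ∃ s, b = a * s) :
    a * st a = b * st b := by
  rcases hab with rfl | ⟨t, ht⟩
  · rfl
  rcases hba with rfl | ⟨s, hs⟩
  · rfl
  have k1 : (a * st a) * b = b := by rw [hs, ← mul_assoc, p1]
  have k2 : (b * st b) * a = a := by rw [ht, ← mul_assoc, p1]
  have ia : (a * st a) * (a * st a) = a * st a := by rw [← mul_assoc, p1]
  have ib : (b * st b) * (b * st b) = b * st b := by rw [← mul_assoc, p1]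
  have m1 : (a * st a) * (b * st b) = b * st b := by rw [← mul_assoc, k1]
  have m2 : (b * st b) * (a * st a) = a * st a := by rw [← mul_assoc, k2]
  have c := idem_comm st p1 p2 uq (a * st a) (b * st b) ia ib
  rw [← m2, ← c]; exact m1

private lemma st_L (p1 : ∀ a : S, a * st a * a = a) (p2 : ∀ a : S, st a * a * st a = st a)
    (uq : ∀ a y : S, a * y * a = a → y * a * y = y → y = st a)
    (a b : S) (hab : a = b ∨ ∃ t, a = t * b) (hba : b = a ∨ ∃ s, b = s * a) :
    st a * a = st b * b := by
  rcases hab with rfl | ⟨t, ht⟩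
  · rfl
  rcases hba with rfl | ⟨s, hs⟩
  · rfl
  have k1 : b * (st a * a) = b := by
    calc b * (st a * a) = (s * a) * (st a * a) := by rw [hs]
    _ = s * (a * st a * a) := by simp only [mul_assoc]
    _ = s * a := by rw [p1]
    _ = b := hs.symm
  have k2 : a * (st b * b) = a := by
    calc a * (st b * b) = (t * b) * (st b * b) := by rw [ht]
    _ = t * (b * st b * b) := by simp only [mul_assoc]
    _ = t * b := by rw [p1]
    _ = a := ht.symm
  have ia : (st a * a) * (st a * a) = st a * a := by
    calc (st a * a) * (st a * a) = (st a * a * st a) * a := by simp only [mul_assoc]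
    _ = st a * a := by rw [p2]
  have ib : (st b * b) * (st b * b) = st b * b := by
    calc (st b * b) * (st b * b) = (st b * b * st b) * b := by simp only [mul_assoc]
    _ = st b * b := by rw [p2]
  have m1 : (st b * b) * (st a * a) = st b * b := by rw [mul_assoc, k1]
  have m2 : (st a * a) * (st b * b) = st a * a := by rw [mul_assoc, k2]
  have c := idem_comm st p1 p2 uq (st a * a) (st b * b) ia ib
  rw [← m2, c]; exact m1

private lemma grp_st (uq : ∀ a y : S, a * y * a = a → y * a * y = y → y = st a)
    (y : S) (hy : ∃ w : S, y * w = w * y ∧ y * w * y = y ∧ w * y * w = w) :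
    y * st y = st y * y := by
  obtain ⟨w, cw1, cw2, cw3⟩ := hy
  have e := uq y w cw2 cw3
  rw [← e]
  exact cw1

end STsec

theorem stmt11 :
    ((∀ a b : S, GrpInvertible a → GrpInvertible b → GrpInvertible (a * b)) →
      (∀ h x : S, GrpInvertible h → VH h x → GrpInvertible x)) ∧
    (((∀ a : S, ∃ x : S, a = a * x * a) ∧
        (∀ a x y : S, refInv a x → refInv a y → x = y)) →
      (∀ h x : S, GrpInvertible h → VH h x → GrpInvertible x)) := by
  constructor
  · -- Part 1: closure of group invertibles
    intro C h x hg hV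
    obtain ⟨H1, H2⟩ := hV
    obtain ⟨h', c1, c2, c3⟩ := hg
    have c2' : ∀ z, h * (h' * (h * z)) = h * z := fun z => by
      rw [← mul_assoc, ← mul_assoc, c2]
    have hHX := assoc_grp H1.2.1 H1.2.2
    have hx1 : GrpInvertible (h * x) := hHX.1
    have hx2 : GrpInvertible (x * h) := hHX.2
    have hinv : GrpInvertible h' := ⟨h, c1.symm, c3, c2⟩
    have t1 : GrpInvertible ((x * h) * h') := C _ _ hx2 hinv
    have t2 : GrpInvertible ((x * h) * h' * (h * x)) := C _ _ t1 hx1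
    have key : (x * h) * h' * (h * x) = x * h * x := by
      simp only [mul_assoc]
      rw [c2' x]
    rw [key] at t2
    exact hclass_grp t2 H2.2.1 H2.2.2 H2.1.1 H2.1.2
  · -- Part 2: inverse semigroup
    intro hyp h x hg hV
    obtain ⟨reg, uniq⟩ := hyp
    obtain ⟨H1, H2⟩ := hV
    choose F hF using reg
    have key : ∀ a : S, ∃ y : S, a * y * a = a ∧ y * a * y = y := by
      intro a
      refine ⟨F a * a * F a, ?_, ?_⟩
      · calc a * (F a * a * F a) * a = (a * F a * a) * (F a * a) := by simp only [mul_assoc]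
        _ = a * (F a * a) := by rw [← hF a]
        _ = a := by rw [← mul_assoc, ← hF a]
      · have hFa' : ∀ z, a * (F a * (a * z)) = a * z := fun z => by
          calc a * (F a * (a * z)) = (a * F a * a) * z := by simp only [mul_assoc]
          _ = a * z := by rw [← hF a]
        calc (F a * a * F a) * a * (F a * a * F a)
            = F a * (a * (F a * (a * (F a * (a * F a))))) := by simp only [mul_assoc]
        _ = F a * (a * (F a * (a * F a))) := by rw [hFa' (F a * (a * F a))]
        _ = F a * (a * F a) := by rw [hFa' (F a)]
        _ = F a * a * F a := by rw [mul_assoc]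
    choose st p1 p2 using key
    have uq : ∀ a y : S, a * y * a = a → y * a * y = y → y = st a := by
      intro a y ha hb
      exact uniq a y (st a) ⟨ha, hb⟩ ⟨p1 a, p2 a⟩
    have hsth : h * st h = st h * h := grp_st st uq h hg
    have hHX := assoc_grp H1.2.1 H1.2.2
    have sxh : st (x * h) = st h * st x := st_mul st p1 p2 uq x h
    have shx : st (h * x) = st x * st h := st_mul st p1 p2 uq h x
    have star1 : (x * h) * (st h * st x) = (st h * st x) * (x * h) := by
      have := grp_st st uq (x * h) hHX.2
      rwa [sxh] at this
    have star2 : (h * x) * (st x * st h) = (st x * st h) * (h * x) := by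
      have := grp_st st uq (h * x) hHX.1
      rwa [shx] at this
    have shxh : st (h * x * h) = st h * (st x * st h) := by
      rw [st_mul st p1 p2 uq (h * x) h, shx]
    have sxhx : st (x * h * x) = st x * (st h * st x) := by
      rw [st_mul st p1 p2 uq (x * h) x, sxh]
    have A1 : (h * x * h) * st (h * x * h) = h * st h := st_R st p1 p2 uq _ _ H1.1.2 H1.2.2
    have A2 : st (h * x * h) * (h * x * h) = st h * h := st_L st p1 p2 uq _ _ H1.1.1 H1.2.1
    have B1 : (x * h * x) * st (x * h * x) = x * st x := st_R st p1 p2 uq _ _ H2.1.2 H2.2.2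
    have B2 : st (x * h * x) * (x * h * x) = st x * x := st_L st p1 p2 uq _ _ H2.1.1 H2.2.1
    have hee : (h * st h) * (h * st h) = h * st h := by rw [← mul_assoc, p1]
    have hff : (x * st x) * (x * st x) = x * st x := by rw [← mul_assoc, p1]
    have hgg : (st x * x) * (st x * x) = st x * x := by
      calc (st x * x) * (st x * x) = (st x * x * st x) * x := by simp only [mul_assoc]
      _ = st x * x := by rw [p2]
    have star1' : ∀ z, x * (h * (st h * (st x * z))) = st h * (st x * (x * (h * z))) := fun z => by
      have := extr star1 z
      simpa only [mul_assoc] using this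
    have star2' : ∀ z, h * (x * (st x * (st h * z))) = st x * (st h * (h * (x * z))) := fun z => by
      have := extr star2 z
      simpa only [mul_assoc] using this
    have E1 : (h * st h) * (st x * x) = h * st h := by
      have T : (h * st h) * ((st x * x) * (h * st h)) = h * st h := by
        calc (h * st h) * ((st x * x) * (h * st h))
            = h * (st h * (st x * (x * (h * st h)))) := by simp only [mul_assoc]
        _ = h * (x * (h * (st h * (st x * st h)))) := by rw [← star1' (st h)]
        _ = (h * x * h) * (st h * (st x * st h)) := by simp only [mul_assoc]
        _ = (h * x * h) * st (h * x * h) := by rw [shxh]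
        _ = h * st h := A1
      rw [idem_comm st p1 p2 uq (st x * x) (h * st h) hgg hee] at T
      rw [← mul_assoc, hee] at T
      exact T
    have E2 : (h * st h) * (x * st x) = h * st h := by
      have T : (st h * h) * ((x * st x) * (st h * h)) = st h * h := by
        calc (st h * h) * ((x * st x) * (st h * h))
            = st h * (h * (x * (st x * (st h * h)))) := by simp only [mul_assoc]
        _ = st h * (st x * (st h * (h * (x * h)))) := by rw [star2' h]
        _ = (st h * (st x * st h)) * (h * x * h) := by simp only [mul_assoc]
        _ = st (h * x * h) * (h * x * h) := by rw [shxh]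
        _ = st h * h := A2
      rw [← hsth] at T
      rw [idem_comm st p1 p2 uq (x * st x) (h * st h) hff hee] at T
      rw [← mul_assoc, hee] at T
      exact T
    have E3 : (x * st x) * (h * st h) = x * st x := by
      have T : (x * st x) * ((st h * h) * (x * st x)) = x * st x := by
        calc (x * st x) * ((st h * h) * (x * st x))
            = x * (st x * (st h * (h * (x * st x)))) := by simp only [mul_assoc]
        _ = x * (h * (x * (st x * (st h * st x)))) := by rw [← star2' (st x)]
        _ = (x * h * x) * (st x * (st h * st x)) := by simp only [mul_assoc]
        _ = (x * h * x) * st (x * h * x) := by rw [sxhx]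
        _ = x * st x := B1
      rw [← hsth] at T
      rw [idem_comm st p1 p2 uq (h * st h) (x * st x) hee hff] at T
      rw [← mul_assoc, hff] at T
      exact T
    have E4 : (st x * x) * (h * st h) = st x * x := by
      have T : (st x * x) * ((h * st h) * (st x * x)) = st x * x := by
        calc (st x * x) * ((h * st h) * (st x * x))
            = st x * (x * (h * (st h * (st x * x)))) := by simp only [mul_assoc]
        _ = st x * (st h * (st x * (x * (h * x)))) := by rw [star1' x]
        _ = (st x * (st h * st x)) * (x * h * x) := by simp only [mul_assoc]
        _ = st (x * h * x) * (x * h * x) := by rw [sxhx]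
        _ = st x * x := B2
      rw [idem_comm st p1 p2 uq (h * st h) (st x * x) hee hgg] at T
      rw [← mul_assoc, hgg] at T
      exact T
    have cef := idem_comm st p1 p2 uq (h * st h) (x * st x) hee hff
    have ceg := idem_comm st p1 p2 uq (h * st h) (st x * x) hee hgg
    have hf_e : x * st x = h * st h := by
      calc x * st x = (x * st x) * (h * st h) := E3.symm
      _ = (h * st h) * (x * st x) := cef.symm
      _ = h * st h := E2
    have hg_e : st x * x = h * st h := by
      calc st x * x = (st x * x) * (h * st h) := E4.symm
      _ = (h * st h) * (st x * x) := ceg.symm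
      _ = h * st h := E1
    refine ⟨st x, ?_, p1 x, p2 x⟩
    rw [hf_e, hg_e]
end

section
/- Let S be a semigroup and let a, b ∈ S be group invertible with group inverses a#, b#. If ab = bb#ab = abaa# and ba = babb# = aa#ba, then ab is group invertible and (ab)# = b#a#. -/
variable {S : Type*} [Semigroup S]

theorem stmt12 (a b x y : S) (hx : IsGrpInv a x) (hy : IsGrpInv b y)
    (h1 : a * b = b * y * (a * b)) (h2 : a * b = a * b * (a * x))
    (h3 : b * a = b * a * (b * y)) (h4 : b * a = a * x * (b * a)) :
    IsGrpInv (a * b) (y * x) := by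
  obtain ⟨hxc, hx1, hx2⟩ := hx
  obtain ⟨hyc, hy1, hy2⟩ := hy
  -- K3 : a*(b*y) = b*(y*a)  (aq = qa)
  have kA : b * (y * (a * (b * y))) = a * (b * y) := by
    calc b * (y * (a * (b * y))) = (b * y * (a * b)) * y := by simp only [mul_assoc]
      _ = (a * b) * y := by rw [← h1]
      _ = a * (b * y) := by simp only [mul_assoc]
  have kB : b * (y * (a * (b * y))) = b * (y * a) := by
    calc b * (y * (a * (b * y))) = (b * y) * (a * (b * y)) := by simp only [mul_assoc]
      _ = (y * b) * (a * (b * y)) := by rw [← hyc]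
      _ = y * ((b * a) * (b * y)) := by simp only [mul_assoc]
      _ = y * (b * a) := by rw [← h3]
      _ = (y * b) * a := by simp only [mul_assoc]
      _ = (b * y) * a := by rw [hyc]
      _ = b * (y * a) := by simp only [mul_assoc]
  have K3 : a * (b * y) = b * (y * a) := by rw [← kA, kB]
  -- K6 : x*(a*b) = b*(a*x)  (pb = bp)
  have kC : x * (a * b) = x * (a * (b * (a * x))) := by
    calc x * (a * b) = x * (a * b * (a * x)) := by rw [← h2]
      _ = x * (a * (b * (a * x))) := by simp only [mul_assoc]
  have kD : x * (a * (b * (a * x))) = b * (a * x) := by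
    calc x * (a * (b * (a * x))) = (x * a) * (b * (a * x)) := by simp only [mul_assoc]
      _ = (a * x) * (b * (a * x)) := by rw [← hxc]
      _ = (a * x * (b * a)) * x := by simp only [mul_assoc]
      _ = (b * a) * x := by rw [← h4]
      _ = b * (a * x) := by simp only [mul_assoc]
  have K6 : x * (a * b) = b * (a * x) := kC.trans kD
  -- ef = qp and fe = qp
  have Eef : (a * b) * (y * x) = (b * y) * (a * x) := by
    calc (a * b) * (y * x) = (a * (b * y)) * x := by simp only [mul_assoc]
      _ = (b * (y * a)) * x := by rw [K3]
      _ = (b * y) * (a * x) := by simp only [mul_assoc]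
  have Efe : (y * x) * (a * b) = (b * y) * (a * x) := by
    calc (y * x) * (a * b) = y * (x * (a * b)) := by simp only [mul_assoc]
      _ = y * (b * (a * x)) := by rw [K6]
      _ = (y * b) * (a * x) := by simp only [mul_assoc]
      _ = (b * y) * (a * x) := by rw [← hyc]
  -- GE : g * e = e
  have GE : ((b * y) * (a * x)) * (a * b) = a * b := by
    calc ((b * y) * (a * x)) * (a * b)
        = b * (y * ((a * x * a) * b)) := by simp only [mul_assoc]
      _ = b * (y * (a * b)) := by rw [hx1]
      _ = b * y * (a * b) := by simp only [mul_assoc]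
      _ = a * b := by rw [← h1]
  -- G2 : g * g = g
  have G2 : ((b * y) * (a * x)) * ((b * y) * (a * x)) = (b * y) * (a * x) := by
    calc ((b * y) * (a * x)) * ((b * y) * (a * x))
        = ((b * y) * (a * x)) * ((a * b) * (y * x)) := by rw [Eef]
      _ = (((b * y) * (a * x)) * (a * b)) * (y * x) := by simp only [mul_assoc]
      _ = (a * b) * (y * x) := by rw [GE]
      _ = (b * y) * (a * x) := Eef
  -- GX : g * x = (b*y) * x
  have GX : ((b * y) * (a * x)) * x = (b * y) * x := by
    calc ((b * y) * (a * x)) * x = ((b * y) * (x * a)) * x := by rw [hxc]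
      _ = (b * y) * (x * a * x) := by simp only [mul_assoc]
      _ = (b * y) * x := by rw [hx2]
  refine ⟨Eef.trans Efe.symm, ?_, ?_⟩
  · -- e f e = e
    calc (a * b) * (y * x) * (a * b) = ((b * y) * (a * x)) * (a * b) := by rw [Eef]
      _ = a * b := GE
  · -- f e f = f
    have QX : b * (y * x) = ((b * y) * (a * x)) * x := by
      rw [GX]; simp only [mul_assoc]
    have YG : y * ((b * y) * (a * x)) = y * (a * x) := by
      calc y * ((b * y) * (a * x)) = (y * b * y) * (a * x) := by simp only [mul_assoc]
        _ = y * (a * x) := by rw [hy2]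
    calc (y * x) * (a * b) * (y * x)
        = (y * (x * a)) * (b * (y * x)) := by simp only [mul_assoc]
      _ = (y * (a * x)) * (b * (y * x)) := by rw [← hxc]
      _ = (y * (a * x)) * (((b * y) * (a * x)) * x) := by rw [QX]
      _ = (y * ((b * y) * (a * x))) * (((b * y) * (a * x)) * x) := by rw [YG]
      _ = (y * (((b * y) * (a * x)) * ((b * y) * (a * x)))) * x := by
            simp only [mul_assoc]
      _ = (y * ((b * y) * (a * x))) * x := by rw [G2]
      _ = (y * (a * x)) * x := by rw [YG]
      _ = (y * (x * a)) * x := by rw [hxc]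
      _ = y * (x * a * x) := by simp only [mul_assoc]
      _ = y * x := by rw [hx2]
end

section
/- Let S be a semigroup and let a, b ∈ S be group invertible with group inverses a#, b#. If ba H ab, then ab is group invertible and (ab)# = b#a#. -/
variable {S : Type*} [Semigroup S]

lemma leL_factor {p q r : S} (h : leL p (q * r)) : ∃ s : S, p = s * r := by
  rcases h with h | ⟨t, ht⟩
  · exact ⟨q, h⟩
  · exact ⟨t * q, by rw [ht, mul_assoc]⟩

lemma leR_factor {p q r : S} (h : leR p (q * r)) : ∃ s : S, p = q * s := by
  rcases h with h | ⟨t, ht⟩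
  · exact ⟨r, h⟩
  · exact ⟨r * t, by rw [ht, ← mul_assoc]⟩

lemma comm_inv {a x c : S} (hx : IsGrpInv a x) (hc : c * a = a * c) :
    x * c = c * x := by
  obtain ⟨hcom, h1, h2⟩ := hx
  have haa : a * (a * x) = a := by
    rw [hcom, ← mul_assoc]; exact h1
  have hxx : x * (x * a) = x := by
    rw [← hcom, ← mul_assoc]; exact h2
  have hex : (a * x) * x = x := by
    rw [hcom]; exact h2
  have step1 : x * c = a * (x * (c * x)) := by
    calc x * c = (x * (x * a)) * c := by rw [hxx]
      _ = x * (x * (a * c)) := by rw [mul_assoc, mul_assoc]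
      _ = x * (x * (c * a)) := by rw [← hc]
      _ = x * (x * (c * (a * (a * x)))) := by rw [haa]
      _ = x * (x * ((c * a) * (a * x))) := by rw [mul_assoc]
      _ = x * (x * ((a * c) * (a * x))) := by rw [hc]
      _ = x * (x * (a * ((c * a) * x))) := by rw [mul_assoc, mul_assoc]
      _ = x * (x * (a * ((a * c) * x))) := by rw [hc]
      _ = x * (x * (a * (a * (c * x)))) := by rw [mul_assoc]
      _ = (x * (x * a)) * (a * (c * x)) := by rw [mul_assoc, mul_assoc]
      _ = x * (a * (c * x)) := by rw [hxx]
      _ = (x * a) * (c * x) := by rw [mul_assoc]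
      _ = (a * x) * (c * x) := by rw [hcom]
      _ = a * (x * (c * x)) := by rw [mul_assoc]
  have hec : (a * x) * c = c * (a * x) := by
    calc (a * x) * c = a * (x * c) := by rw [mul_assoc]
      _ = a * (a * (x * (c * x))) := by rw [step1]
      _ = (a * (a * x)) * (c * x) := by rw [mul_assoc, mul_assoc]
      _ = a * (c * x) := by rw [haa]
      _ = (a * c) * x := by rw [mul_assoc]
      _ = (c * a) * x := by rw [← hc]
      _ = c * (a * x) := by rw [mul_assoc]
  calc x * c = a * (x * (c * x)) := step1
    _ = (a * x) * (c * x) := by simp only [mul_assoc]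
    _ = ((a * x) * c) * x := by simp only [mul_assoc]
    _ = (c * (a * x)) * x := by rw [hec]
    _ = c * ((a * x) * x) := by rw [mul_assoc]
    _ = c * x := by rw [hex]

theorem stmt13 (a b x y : S) (hx : IsGrpInv a x) (hy : IsGrpInv b y)
    (h : grH (b * a) (a * b)) :
    IsGrpInv (a * b) (y * x) := by
  obtain ⟨hxc, hx1, hx2⟩ := id hx
  obtain ⟨hyc, hy1, hy2⟩ := id hy
  obtain ⟨s1, hs1⟩ : ∃ s : S, b * a = s * b := leL_factor h.1.1
  obtain ⟨s2, hs2⟩ : ∃ s : S, b * a = a * s := leR_factor h.1.2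
  obtain ⟨s3, hs3⟩ : ∃ s : S, a * b = s * a := leL_factor h.2.1
  obtain ⟨s4, hs4⟩ : ∃ s : S, a * b = b * s := leR_factor h.2.2
  have haa : a * (a * x) = a := by rw [hxc, ← mul_assoc]; exact hx1
  have hbb : b * (b * y) = b := by rw [hyc, ← mul_assoc]; exact hy1
  have hexx : (a * x) * x = x := by rw [hxc]; exact hx2
  -- absorption identities
  have A1 : (b * a) * (b * y) = b * a := by rw [hs1, mul_assoc, hbb]
  have A2 : (a * x) * (b * a) = b * a := by rw [hs2, ← mul_assoc, hx1]
  have A3 : (a * b) * (a * x) = a * b := by rw [hs3, mul_assoc, haa]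
  have A4 : (b * y) * (a * b) = a * b := by rw [hs4, ← mul_assoc, hy1]
  -- e = a*x commutes with b
  have D : a * x * b * (a * x) = a * x * b := by
    have h1' := congrArg (fun t => x * t) A3
    simp only [← mul_assoc] at h1'
    simp only [← mul_assoc]
    rw [hxc]
    exact h1'
  have AA : a * x * b * (a * x) = b * (a * x) := by
    have h2' := congrArg (fun t => t * x) A2
    simp only [← mul_assoc] at h2'
    simp only [← mul_assoc]
    exact h2'
  have eb_comm : a * x * b = b * (a * x) := D.symm.trans AA
  -- f = b*y commutes with a
  have B : b * y * a * (b * y) = a * (b * y) := by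
    have h3' := congrArg (fun t => t * y) A4
    simp only [← mul_assoc] at h3'
    simp only [← mul_assoc]
    exact h3'
  have C : b * y * a * (b * y) = b * y * a := by
    have h4' := congrArg (fun t => y * t) A1
    simp only [← mul_assoc] at h4'
    rw [← hyc] at h4'
    simp only [← mul_assoc]
    exact h4'
  have fa_comm : a * (b * y) = b * y * a := B.symm.trans C
  have ey_comm : y * (a * x) = (a * x) * y := comm_inv hy eb_comm
  -- key reduction: x * (a * b) = b * (a * x)
  have h5 : x * (a * b) = b * (a * x) := by
    calc x * (a * b) = (x * a) * b := by rw [mul_assoc]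
      _ = (a * x) * b := by rw [hxc]
      _ = b * (a * x) := eb_comm
  refine ⟨?_, ?_, ?_⟩
  · calc (a * b) * (y * x) = (a * (b * y)) * x := by simp only [mul_assoc]
      _ = ((b * y) * a) * x := by rw [fa_comm]
      _ = (b * y) * (a * x) := by rw [mul_assoc]
      _ = (y * b) * (a * x) := by rw [hyc]
      _ = y * (b * (a * x)) := by rw [mul_assoc]
      _ = y * (x * (a * b)) := by rw [h5]
      _ = (y * x) * (a * b) := by rw [mul_assoc]
  · calc ((a * b) * (y * x)) * (a * b)
        = a * (b * (y * (x * (a * b)))) := by simp only [mul_assoc]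
      _ = a * (b * (y * (b * (a * x)))) := by rw [h5]
      _ = a * (((b * y) * b) * (a * x)) := by simp only [mul_assoc]
      _ = a * (b * (a * x)) := by rw [hy1]
      _ = (a * b) * (a * x) := by simp only [mul_assoc]
      _ = a * b := A3
  · calc ((y * x) * (a * b)) * (y * x)
        = (y * (x * (a * b))) * (y * x) := by rw [mul_assoc y x (a * b)]
      _ = (y * (b * (a * x))) * (y * x) := by rw [h5]
      _ = ((y * b) * (a * x)) * (y * x) := by rw [← mul_assoc y b (a * x)]
      _ = (y * b) * (((a * x) * y) * x) := by simp only [mul_assoc]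
      _ = (y * b) * ((y * (a * x)) * x) := by rw [← ey_comm]
      _ = ((y * b) * y) * ((a * x) * x) := by simp only [mul_assoc]
      _ = y * x := by rw [hy2, hexx]
end

section
/- Let S be a semigroup and let a, b, ab, ba ∈ S all be group invertible, with (ab)# = b#a# and (ba)# = a#b#. Then ab H ba. -/
variable {S : Type*} [Semigroup S]

theorem stmt14 (a b x y : S) (hx : IsGrpInv a x) (hy : IsGrpInv b y)
    (hab : IsGrpInv (a * b) (y * x)) (hba : IsGrpInv (b * a) (x * y)) :
    grH (a * b) (b * a) := by
  obtain ⟨hx1, hx2, hx3⟩ := hx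
  obtain ⟨hy1, hy2, hy3⟩ := hy
  obtain ⟨hab1, hab2, hab3⟩ := hab
  obtain ⟨hba1, hba2, hba3⟩ := hba
  simp only [← mul_assoc] at hab1 hab2 hab3 hba1 hba2 hba3
  have P0 : (a * x : S) = x * a := hx1
  have C0 : ∀ t : S, a * (x * t) = x * (a * t) := by intro t; simp only [← mul_assoc]; rw [hx1]
  have P1 : (a * (x * a) : S) = a := by simp only [← mul_assoc]; rw [hx2]
  have C1 : ∀ t : S, a * (x * (a * t)) = a * t := by intro t; simp only [← mul_assoc]; rw [hx2]
  have P2 : (x * (a * x) : S) = x := by simp only [← mul_assoc]; rw [hx3]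
  have C2 : ∀ t : S, x * (a * (x * t)) = x * t := by intro t; simp only [← mul_assoc]; rw [hx3]
  have P3 : (b * y : S) = y * b := hy1
  have C3 : ∀ t : S, b * (y * t) = y * (b * t) := by intro t; simp only [← mul_assoc]; rw [hy1]
  have P4 : (b * (y * b) : S) = b := by simp only [← mul_assoc]; rw [hy2]
  have C4 : ∀ t : S, b * (y * (b * t)) = b * t := by intro t; simp only [← mul_assoc]; rw [hy2]
  have P5 : (y * (b * y) : S) = y := by simp only [← mul_assoc]; rw [hy3]
  have C5 : ∀ t : S, y * (b * (y * t)) = y * t := by intro t; simp only [← mul_assoc]; rw [hy3]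
  have P6 : (a * (b * (y * x)) : S) = y * (x * (a * b)) := by simp only [← mul_assoc]; rw [hab1]
  have C6 : ∀ t : S, a * (b * (y * (x * t))) = y * (x * (a * (b * t))) := by intro t; simp only [← mul_assoc]; rw [hab1]
  have P7 : (a * (b * (y * (x * (a * b)))) : S) = a * b := by simp only [← mul_assoc]; rw [hab2]
  have C7 : ∀ t : S, a * (b * (y * (x * (a * (b * t))))) = a * (b * t) := by intro t; simp only [← mul_assoc]; rw [hab2]
  have P8 : (y * (x * (a * (b * (y * x)))) : S) = y * x := by simp only [← mul_assoc]; rw [hab3]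
  have C8 : ∀ t : S, y * (x * (a * (b * (y * (x * t))))) = y * (x * t) := by intro t; simp only [← mul_assoc]; rw [hab3]
  have P9 : (b * (a * (x * y)) : S) = x * (y * (b * a)) := by simp only [← mul_assoc]; rw [hba1]
  have C9 : ∀ t : S, b * (a * (x * (y * t))) = x * (y * (b * (a * t))) := by intro t; simp only [← mul_assoc]; rw [hba1]
  have P10 : (b * (a * (x * (y * (b * a)))) : S) = b * a := by simp only [← mul_assoc]; rw [hba2]
  have C10 : ∀ t : S, b * (a * (x * (y * (b * (a * t))))) = b * (a * t) := by intro t; simp only [← mul_assoc]; rw [hba2]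
  have P11 : (x * (y * (b * (a * (x * y)))) : S) = x * y := by simp only [← mul_assoc]; rw [hba3]
  have C11 : ∀ t : S, x * (y * (b * (a * (x * (y * t))))) = x * (y * t) := by intro t; simp only [← mul_assoc]; rw [hba3]
  have key : (b * (a * (x * y)) : S) = a * (b * (y * x)) := by
    calc
      (b * (a * (x * y)) : S) = b * (y * (b * (a * (x * y)))) := by conv_lhs => rw [← C4]  -- occ 1
      _ = b * (y * (x * (y * (b * a)))) := by conv_lhs => rw [P9]  -- occ 1
      _ = b * (y * (x * (a * (b * (y * (x * (y * (b * a)))))))) := by conv_lhs => rw [← C8]  -- occ 1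
      _ = y * (b * (x * (a * (b * (y * (x * (y * (b * a)))))))) := by conv_lhs => rw [C3]  -- occ 2
      _ = y * (b * (x * (y * (x * (a * (b * (y * (b * a)))))))) := by conv_lhs => rw [C6]  -- occ 1
      _ = y * (b * (x * (y * (x * (a * (b * a)))))) := by conv_lhs => rw [C4]  -- occ 1
      _ = y * (b * (x * (a * (b * (y * (x * a)))))) := by conv_lhs => rw [← C6]  -- occ 1
      _ = y * (b * (a * (x * (b * (y * (x * a)))))) := by conv_lhs => rw [← C0]  -- occ 2
      _ = y * (b * (a * (x * (b * (y * (a * x)))))) := by conv_lhs => rw [← P0]  -- occ 1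
      _ = y * (b * (a * (x * (y * (b * (a * x)))))) := by conv_lhs => rw [C3]  -- occ 1
      _ = y * (x * (y * (b * (a * (b * (a * x)))))) := by conv_lhs => rw [C9]  -- occ 1
      _ = y * (x * (a * (x * (y * (b * (a * (b * (a * x)))))))) := by conv_lhs => rw [← C2]  -- occ 2
      _ = y * (x * (a * (b * (a * (x * (y * (b * (a * x)))))))) := by conv_lhs => rw [← C9]  -- occ 1
      _ = y * (x * (a * (b * (a * x)))) := by conv_lhs => rw [C10]  -- occ 1
      _ = a * (b * (y * (x * (a * x)))) := by conv_lhs => rw [← C6]  -- occ 1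
      _ = a * (b * (y * x)) := by conv_lhs => rw [P2]  -- occ 1

  have keyf : b * a * x * y = a * b * y * x := by
    have h := key; simp only [← mul_assoc] at h; exact h
  have keyC : ∀ t : S, b * (a * (x * (y * t))) = a * (b * (y * (x * t))) := by
    intro t; simp only [← mul_assoc]; rw [keyf]
  have fact1 : (a * (b * (x * (y * (b * a)))) : S) = a * b := by
    calc (a * (b * (x * (y * (b * a)))) : S)
        = a * (b * (b * (a * (x * y)))) := by conv_lhs => rw [← P9]
      _ = a * (b * (a * (b * (y * x)))) := by conv_lhs => rw [key]
      _ = a * (b * (y * (x * (a * b)))) := by conv_lhs => rw [P6]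
      _ = a * b := P7
  have fact2 : (b * (a * (x * (y * (a * b)))) : S) = a * b := by
    rw [keyC]; exact P7
  have fact3 : (b * (a * (y * (x * (a * b)))) : S) = b * a := by
    calc (b * (a * (y * (x * (a * b)))) : S)
        = b * (a * (a * (b * (y * x)))) := by conv_lhs => rw [← P6]
      _ = b * (a * (b * (a * (x * y)))) := by conv_lhs => rw [← key]
      _ = b * (a * (x * (y * (b * a)))) := by conv_lhs => rw [P9]
      _ = b * a := P10
  have fact4 : (a * (b * (y * (x * (b * a)))) : S) = b * a := by
    rw [← keyC]; exact P10
  refine ⟨⟨Or.inr ⟨a * b * (x * y), ?_⟩, Or.inr ⟨x * y * (a * b), ?_⟩⟩,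
          Or.inr ⟨b * a * (y * x), ?_⟩, Or.inr ⟨y * x * (b * a), ?_⟩⟩
  · simp only [mul_assoc]; exact fact1.symm
  · simp only [mul_assoc]; exact fact2.symm
  · simp only [mul_assoc]; exact fact3.symm
  · simp only [mul_assoc]; exact fact4.symm
end

section
/- A semigroup S is completely inverse if and only if S is regular and ℋ(S) = Z(E(S)), i.e. the set of group invertible elements coincides with the centralizer of the idempotents. -/
variable {S : Type*} [Semigroup S]

/-- Auxiliary: half of the `H`-relation for products of group invertibles
commuting with all idempotents. -/
lemma aux_leH (a b a' b' : S) (ha : IsGrpInv a a') (hb : IsGrpInv b b')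
    (hZa : ∀ e : S, e * e = e → a * e = e * a)
    (hZa' : ∀ e : S, e * e = e → a' * e = e * a')
    (hZb : ∀ e : S, e * e = e → b * e = e * b)
    (hZb' : ∀ e : S, e * e = e → b' * e = e * b') :
    leH (a * b) (b * a) := by
  obtain ⟨ca, ha2, ha3⟩ := ha
  obtain ⟨cb, hb2, hb3⟩ := hb
  have he : a * a' * (a * a') = a * a' := by rw [← mul_assoc, ha2]
  have hf : b * b' * (b * b') = b * b' := by rw [← mul_assoc, hb2]
  have hae : a * (a * a') = a := by rw [ca, ← mul_assoc, ha2]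
  have hbf : b * (b * b') = b := by rw [cb, ← mul_assoc, hb2]
  have ha'e : a' * a = a * a' := ca.symm
  have hb'f : b' * b = b * b' := cb.symm
  constructor
  · -- leL (a*b) (b*a)
    refine Or.inr ⟨a * b * (a' * b'), ?_⟩
    have key : (a * b * (a' * b')) * (b * a) = a * b := by
      simp only [mul_assoc]
      -- ⊢ a * (b * (a' * (b' * (b * a)))) = a * b
      rw [← mul_assoc b' b a, hb'f, ← mul_assoc a' (b * b') a, hZa' _ hf,
        mul_assoc (b * b') a' a, ha'e, ← mul_assoc b (b * b') (a * a'), hbf,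
        hZb _ he, ← mul_assoc a (a * a') b, hae]
    exact key.symm
  · -- leR (a*b) (b*a)
    refine Or.inr ⟨(a' * b') * (a * b), ?_⟩
    have key : (b * a) * ((a' * b') * (a * b)) = a * b := by
      simp only [mul_assoc]
      -- ⊢ b * (a * (a' * (b' * (a * b)))) = a * b
      rw [← mul_assoc a a' (b' * (a * b)), ← mul_assoc (a * a') b' (a * b),
        ← hZb' _ he, mul_assoc b' (a * a') (a * b), ← mul_assoc (a * a') a b, ha2,
        ← mul_assoc b b' (a * b), ← mul_assoc (b * b') a b, ← hZa _ hf,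
        mul_assoc a (b * b') b, hb2]
    exact key.symm

theorem stmt16 :
    ((∀ a : S, ∃ x : S, a = a * x * a) ∧
      (∀ a b : S, GrpInvertible a → GrpInvertible b → grH (a * b) (b * a))) ↔
    ((∀ a : S, ∃ x : S, a = a * x * a) ∧
      {a : S | GrpInvertible a} = {x : S | ∀ e : S, e * e = e → x * e = e * x}) := by
  constructor
  · rintro ⟨reg, h⟩
    refine ⟨reg, Set.ext fun x => ?_⟩
    constructor
    · -- group invertible → commutes with idempotents
      intro hx e he
      have he' : GrpInvertible e := ⟨e, rfl, by rw [he, he], by rw [he, he]⟩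
      obtain ⟨⟨_, hR⟩, ⟨hL', _⟩⟩ := h x e hx he'
      have h1 : e * (x * e) = x * e := by
        rcases hR with h0 | ⟨y, hy⟩
        · rw [h0, ← mul_assoc, he]
        · rw [hy, ← mul_assoc, ← mul_assoc, he]
      have h2 : (e * x) * e = e * x := by
        rcases hL' with h0 | ⟨z, hz⟩
        · rw [h0, mul_assoc, he]
        · rw [hz, mul_assoc z, mul_assoc x, he]
      calc x * e = e * (x * e) := h1.symm
        _ = (e * x) * e := (mul_assoc e x e).symm
        _ = e * x := h2
    · -- commutes with idempotents → group invertible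
      intro hx
      obtain ⟨y, hxy⟩ := reg x
      have hidem1 : (x * y) * (x * y) = x * y := by
        rw [← mul_assoc, ← hxy]
      have hidem2 : (y * x) * (y * x) = y * x := by
        rw [mul_assoc, ← mul_assoc x, ← hxy]
      have c1 := hx (x * y) hidem1
      have c2 := hx (y * x) hidem2
      have e1 : x * (x * y) = x := by rw [c1, ← hxy]
      have e2 : (y * x) * x = x := by rw [← c2, ← mul_assoc, ← hxy]
      have hcomm : x * y = y * x := by
        calc x * y = ((y * x) * x) * y := by rw [e2]
          _ = (y * x) * (x * y) := by rw [mul_assoc]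
          _ = y * (x * (x * y)) := by rw [mul_assoc]
          _ = y * x := by rw [e1]
      have key : x * (y * x * y) = x * y := by
        rw [← mul_assoc, ← mul_assoc, ← hxy]
      have key2 : (y * x * y) * x = y * x := by
        rw [mul_assoc, hidem2]
      refine ⟨y * x * y, ?_, ?_, ?_⟩
      · rw [key, key2, hcomm]
      · rw [key, ← hxy]
      · rw [key2, ← mul_assoc, hidem2]
  · rintro ⟨reg, hset⟩
    refine ⟨reg, fun a b ha hb => ?_⟩
    have hZ : ∀ c : S, GrpInvertible c → ∀ e : S, e * e = e → c * e = e * c := by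
      intro c hc
      exact (Set.ext_iff.mp hset c).mp hc
    obtain ⟨a', ha'⟩ := ha
    obtain ⟨b', hb'⟩ := hb
    have ha'' : GrpInvertible a' := ⟨a, ha'.1.symm, ha'.2.2, ha'.2.1⟩
    have hb'' : GrpInvertible b' := ⟨b, hb'.1.symm, hb'.2.2, hb'.2.1⟩
    exact ⟨aux_leH a b a' b' ha' hb' (hZ a ⟨a', ha'⟩) (hZ a' ha'') (hZ b ⟨b', hb'⟩) (hZ b' hb''),
      aux_leH b a b' a' hb' ha' (hZ b ⟨b', hb'⟩) (hZ b' hb'') (hZ a ⟨a', ha'⟩) (hZ a' ha'')⟩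
end

section
/- Let S be a semigroup. Then ab H ba for all a, b ∈ ℋ(S) if and only if ℋ(S) ⊆ Z(E(S)), i.e. every group invertible element commutes with every idempotent. -/
variable {S : Type*} [Semigroup S]

lemma key_leH (Z : ∀ h : S, GrpInvertible h → ∀ e : S, e * e = e → h * e = e * h)
    {a b : S} (ha : GrpInvertible a) (hb : GrpInvertible b) : leH (a * b) (b * a) := by
  obtain ⟨a', haa, ha1, ha2⟩ := ha
  obtain ⟨b', hbb, hb1, hb2⟩ := hb
  have ga : GrpInvertible a := ⟨a', haa, ha1, ha2⟩
  have gb : GrpInvertible b := ⟨b', hbb, hb1, hb2⟩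
  have ga' : GrpInvertible a' := ⟨a, haa.symm, ha2, ha1⟩
  have gb' : GrpInvertible b' := ⟨b, hbb.symm, hb2, hb1⟩
  have ee : (a * a') * (a * a') = a * a' := by
    calc (a * a') * (a * a') = (a * a' * a) * a' := by simp only [mul_assoc]
    _ = a * a' := by rw [ha1]
  have ee2 : (a' * a) * (a' * a) = a' * a := by
    calc (a' * a) * (a' * a) = (a' * a * a') * a := by simp only [mul_assoc]
    _ = a' * a := by rw [ha2]
  have ff : (b * b') * (b * b') = b * b' := by
    calc (b * b') * (b * b') = (b * b' * b) * b' := by simp only [mul_assoc]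
    _ = b * b' := by rw [hb1]
  have ff2 : (b' * b) * (b' * b) = b' * b := by
    calc (b' * b) * (b' * b) = (b' * b * b') * b := by simp only [mul_assoc]
    _ = b' * b := by rw [hb2]
  have h1 : a' * (b' * b) = (b' * b) * a' := Z a' ga' _ ff2
  have h2 : b * (a' * a) = (a' * a) * b := Z b gb _ ee2
  have h3 : b' * (a * a') = (a * a') * b' := Z b' gb' _ ee
  have h4 : a * (b * b') = (b * b') * a := Z a ga _ ff
  constructor
  · -- leL : a*b = x * (b*a)
    refine Or.inr ⟨a * b * a' * b', ?_⟩
    calc a * b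
        = (a * (a' * a)) * b := by rw [← mul_assoc, ha1]
      _ = a * ((a' * a) * b) := by simp only [mul_assoc]
      _ = a * (b * (a' * a)) := by rw [h2]
      _ = (a * b) * (a' * a) := by simp only [mul_assoc]
      _ = (a * (b * (b' * b))) * (a' * a) := by rw [← mul_assoc b b' b, hb1]
      _ = (a * b) * ((b' * b) * a') * a := by simp only [mul_assoc]
      _ = (a * b) * (a' * (b' * b)) * a := by rw [h1]
      _ = (a * b * a' * b') * (b * a) := by simp only [mul_assoc]
  · -- leR : a*b = (b*a) * y
    refine Or.inr ⟨a' * b' * a * b, ?_⟩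
    calc a * b
        = a * (b * b' * b) := by rw [hb1]
      _ = (a * (b * b')) * b := by simp only [mul_assoc]
      _ = ((b * b') * a) * b := by rw [h4]
      _ = (b * b') * ((a * a') * a) * b := by rw [ha1]
      _ = b * (b' * (a * a')) * (a * b) := by simp only [mul_assoc]
      _ = b * ((a * a') * b') * (a * b) := by rw [h3]
      _ = (b * a) * (a' * b' * a * b) := by simp only [mul_assoc]

theorem stmt17 :
    (∀ a b : S, GrpInvertible a → GrpInvertible b → grH (a * b) (b * a)) ↔
    (∀ h : S, GrpInvertible h → ∀ e : S, e * e = e → h * e = e * h) := by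
  constructor
  · intro H h hh e he
    have ge : GrpInvertible e := ⟨e, rfl, by rw [he, he], by rw [he, he]⟩
    obtain ⟨⟨_, hR⟩, hL, _⟩ := H h e hh ge
    have h1 : e * (h * e) = h * e := by
      rcases hR with heq | ⟨y, hy⟩
      · rw [heq, ← mul_assoc, he]
      · calc e * (h * e) = e * (e * h * y) := by rw [hy]
          _ = (e * e) * h * y := by simp only [mul_assoc]
          _ = e * h * y := by rw [he]
          _ = h * e := hy.symm
    have h2 : e * h * e = e * h := by
      rcases hL with heq | ⟨x, hx⟩
      · rw [heq, mul_assoc, he]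
      · calc e * h * e = x * (h * e) * e := by rw [hx]
          _ = x * (h * (e * e)) := by simp only [mul_assoc]
          _ = x * (h * e) := by rw [he]
          _ = e * h := hx.symm
    rw [← h1, ← mul_assoc, h2]
  · intro Z a b ha hb
    exact ⟨key_leH Z ha hb, key_leH Z hb ha⟩
end
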